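/- arXiv:1008.3646 — 6 statements merged into one kernel-verified Lean document; each statement's English description precedes it below -/
import Mathlib

section
/- For any p,q,n with p+q = 2n and p,q ≥ 1, the complete bipartite graphs K_{n,n} and K_{p,q} are cospectral with respect to the normalized Laplacian. -/
open scoped Classical
noncomputable def adjM {V : Type*} [Fintype V] (G : SimpleGraph V) : Matrix V V ℝ :=
  fun u v => if G.Adj u v then 1 else 0
noncomputable def degM {V : Type*} [Fintype V] (G : SimpleGraph V) : Matrix V V ℝ :=
  Matrix.diagonal fun v => (G.degree v : ℝ)
noncomputable def normLap {V : Type*} [Fintype V] (G : SimpleGraph V) : Matrix V V ℝ :=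
  Matrix.diagonal (fun v => (Real.sqrt (G.degree v))⁻¹) * (degM G - adjM G) *
    Matrix.diagonal (fun v => (Real.sqrt (G.degree v))⁻¹)

/-! In `K_{p,q}` the vertices of one side have degree `q` and those of the other side degree `p`,
so the normalized Laplacian is `1 - c • [[0, J], [J, 0]]` with all-ones blocks `J` and
`c = 1/√(pq)`. A Schur complement gives
`det (x - 𝓛) * (x - 1)^2 = (x - 1)^(p+q) * ((x - 1)^2 - c^2 p q)`, and `c^2 p q = 1`, so the
characteristic polynomial depends only on `p + q`. -/

open Matrix Polynomial

section degree
variable {V W : Type*} [Fintype V] [Fintype W]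

lemma completeBipartiteGraph_degree_inl (v : V) :
    (completeBipartiteGraph V W).degree (Sum.inl v) = Fintype.card W := by
  rw [← SimpleGraph.card_neighborSet_eq_degree,
    ← Set.card_range_of_injective (Sum.inr_injective (α := V) (β := W))]
  exact Fintype.card_congr (Equiv.setCongr (by ext (_ | _) <;> simp))

lemma completeBipartiteGraph_degree_inr (w : W) :
    (completeBipartiteGraph V W).degree (Sum.inr w) = Fintype.card V := by
  rw [← SimpleGraph.card_neighborSet_eq_degree,
    ← Set.card_range_of_injective (Sum.inl_injective (α := V) (β := W))]
  exact Fintype.card_congr (Equiv.setCongr (by ext (_ | _) <;> simp))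

end degree

namespace Matrix
variable {m n R : Type*} [Fintype m] [Fintype n] [DecidableEq m] [DecidableEq n]

lemma det_one_add_smul_allOnes [CommRing R] (t : R) :
    det (1 + t • of fun _ _ => 1 : Matrix n n R) = 1 + Fintype.card n * t := by
  have : (t • of fun _ _ => 1 : Matrix n n R) =
      replicateCol Unit (fun _ => t) * replicateRow Unit (fun _ => (1 : R)) := by
    ext; simp [Matrix.mul_apply]
  rw [this, det_one_add_replicateCol_mul_replicateRow]
  simp [dotProduct]

lemma det_fromBlocks_smul_one_smul_allOnes [Field R] {y : R} (hy : y ≠ 0) (c : R) :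
    det (fromBlocks (y • 1) (c • of fun _ _ => 1) (c • of fun _ _ => 1) (y • 1) :
        Matrix (m ⊕ n) (m ⊕ n) R) * y ^ 2 =
      y ^ (Fintype.card m + Fintype.card n) *
        (y ^ 2 - c ^ 2 * Fintype.card m * Fintype.card n) := by
  have hfactor : (fromBlocks (y • 1) (c • of fun _ _ => 1) (c • of fun _ _ => 1) (y • 1) :
        Matrix (m ⊕ n) (m ⊕ n) R) =
      y • fromBlocks 1 ((c / y) • of fun _ _ => 1) ((c / y) • of fun _ _ => 1) 1 := by
    simp only [fromBlocks_smul, smul_smul, mul_div_cancel₀ c hy]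
  have hschur : (1 : Matrix n n R) - ((c / y) • of fun _ _ => 1 : Matrix n m R) *
        ((c / y) • of fun _ _ => 1 : Matrix m n R) =
      1 + (-((c / y) ^ 2 * Fintype.card m)) • of fun _ _ => 1 := by
    ext; simp [Matrix.mul_apply, sub_eq_add_neg]; ring
  rw [hfactor, det_smul, det_fromBlocks_one₁₁, hschur, det_one_add_smul_allOnes,
    Fintype.card_sum]
  field_simp
  ring

end Matrix

section completeBipartite
variable {V W : Type*} [Fintype V] [Fintype W] [DecidableEq V] [DecidableEq W]
  [Nonempty V] [Nonempty W]

lemma normLap_completeBipartiteGraph :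
    normLap (completeBipartiteGraph V W) =
      fromBlocks 1 (-(√(Fintype.card V * Fintype.card W))⁻¹ • of fun _ _ => 1)
        (-(√(Fintype.card V * Fintype.card W))⁻¹ • of fun _ _ => 1) 1 := by
  have hV : (0 : ℝ) < Fintype.card V := by exact_mod_cast Fintype.card_pos
  have hW : (0 : ℝ) < Fintype.card W := by exact_mod_cast Fintype.card_pos
  ext (i | i) (j | j) <;>
    simp [normLap, degM, adjM, one_apply, completeBipartiteGraph_degree_inl,
      completeBipartiteGraph_degree_inr, Real.sqrt_mul hV.le, mul_comm, diagonal_apply] <;>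
    split_ifs <;> field_simp <;> simp [hV.le, hW.le]

-- Multiplying by `(X - 1)^2` avoids the truncated exponent in the closed form
-- `(X - 1)^(|V| + |W| - 2) * X * (X - 2)`.
lemma charpoly_normLap_completeBipartiteGraph_mul :
    (normLap (completeBipartiteGraph V W)).charpoly * (X - C 1) ^ 2 =
      (X - C 1) ^ (Fintype.card V + Fintype.card W) * ((X - C 1) ^ 2 - 1) := by
  set c : ℝ := (√(Fintype.card V * Fintype.card W))⁻¹
  have hc : c ^ 2 * Fintype.card V * Fintype.card W = 1 := by
    have : (0 : ℝ) < Fintype.card V * Fintype.card W := by positivity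
    rw [inv_pow, Real.sq_sqrt this.le, mul_assoc, inv_mul_cancel₀ this.ne']
  refine Polynomial.funext fun x => ?_
  simp only [eval_mul, eval_pow, eval_sub, eval_X, eval_C, eval_one, eval_charpoly]
  rcases eq_or_ne (x - 1) 0 with hx | hx
  · rw [hx, zero_pow two_ne_zero, zero_pow (by positivity : Fintype.card V + Fintype.card W ≠ 0)]
    simp
  have hblocks : scalar (V ⊕ W) x - normLap (completeBipartiteGraph V W) =
      fromBlocks ((x - 1) • 1) (c • of fun _ _ => 1) (c • of fun _ _ => 1) ((x - 1) • 1) := by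
    rw [normLap_completeBipartiteGraph]
    ext (i | i) (j | j) <;> simp [c, one_apply, diagonal_apply] <;> split_ifs <;> ring
  rw [hblocks, det_fromBlocks_smul_one_smul_allOnes hx, hc]

end completeBipartite

/-- For `p + q = 2n` with `p, q ≥ 1`, the graphs `K_{n,n}` and `K_{p,q}` are cospectral
with respect to the normalized Laplacian. -/
theorem stmt1 (n p q : ℕ) (hp : 1 ≤ p) (hq : 1 ≤ q) (hpq : p + q = 2 * n) :
    (normLap (completeBipartiteGraph (Fin n) (Fin n))).charpoly =
    (normLap (completeBipartiteGraph (Fin p) (Fin q))).charpoly := by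
  have : Nonempty (Fin n) := Fin.pos_iff_nonempty.mp (by omega)
  have : Nonempty (Fin p) := Fin.pos_iff_nonempty.mp hp
  have : Nonempty (Fin q) := Fin.pos_iff_nonempty.mp hq
  refine mul_right_cancel₀ (pow_ne_zero 2 (X_sub_C_ne_zero 1)) ?_
  rw [charpoly_normLap_completeBipartiteGraph_mul, charpoly_normLap_completeBipartiteGraph_mul,
    Fintype.card_fin, Fintype.card_fin, Fintype.card_fin, hpq, two_mul]
end

section
/- Let P be a bipartite graph with parts B and C (all edges between B and C, every vertex of positive degree). If x is an eigenvector of the normalized Laplacian for eigenvalue 1, write x = b + c where b is supported on B and c on C. Then b and c each satisfy \mathcal{L}b = b and \mathcal{L}c = c (whenever nonzero they are eigenvectors for eigenvalue 1). -/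
open scoped Classical
/-!
Since `ℒ = I - D^{-1/2} A D^{-1/2}` with `D^{-1/2}` invertible, `ℒ x = x` says exactly that
`A (D^{-1/2} x) = 0`. When every edge joins `B` to `C`, the adjacency matrix maps vectors
supported on `B` to vectors supported on `C` and vice versa, so `A w = 0` splits into
`A w_B = 0` and `A w_C = 0`; and `D^{-1/2}` commutes with restriction to `B` or `C`.
-/

open Matrix

lemma Matrix.diagonal_mulVec_indicator {V : Type*} [Fintype V] (d y : V → ℝ) (S : Set V) :
    diagonal d *ᵥ S.indicator y = S.indicator (diagonal d *ᵥ y) := by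
  ext v
  simp only [mulVec_diagonal, Set.indicator_apply]
  split_ifs <;> simp

namespace SimpleGraph

variable {V : Type*} [Fintype V] (G : SimpleGraph V)

noncomputable def invSqrtDegM : Matrix V V ℝ :=
  diagonal fun v => (√(G.degree v))⁻¹

lemma adjM_mulVec_indicator {S : Set V} (hS : ∀ u v, G.Adj u v → (u ∈ S ↔ v ∉ S))
    (w : V → ℝ) : adjM G *ᵥ S.indicator w = Sᶜ.indicator (adjM G *ᵥ w) := by
  ext u
  simp only [mulVec, dotProduct, adjM, Set.indicator_apply, Set.mem_compl_iff]
  by_cases hu : u ∈ S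
  · rw [if_neg (not_not.mpr hu)]
    refine Finset.sum_eq_zero fun v _ => ?_
    by_cases huv : G.Adj u v
    · simp [huv, (hS u v huv).mp hu]
    · simp [huv]
  · rw [if_pos hu]
    refine Finset.sum_congr rfl fun v _ => ?_
    by_cases huv : G.Adj u v
    · simp [huv, not_not.mp (mt (hS u v huv).mpr hu)]
    · simp [huv]

lemma invSqrtDegM_mul_degM_mul_invSqrtDegM (hdeg : ∀ v, 0 < G.degree v) :
    G.invSqrtDegM * degM G * G.invSqrtDegM = 1 := by
  rw [invSqrtDegM, degM, diagonal_mul_diagonal, diagonal_mul_diagonal, ← diagonal_one]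
  congr 1
  ext v
  have hd : (0 : ℝ) < G.degree v := by exact_mod_cast hdeg v
  have hs : √(G.degree v : ℝ) ≠ 0 := (Real.sqrt_pos.mpr hd).ne'
  field_simp
  exact (Real.sq_sqrt hd.le).symm

lemma normLap_eq_one_sub (hdeg : ∀ v, 0 < G.degree v) :
    normLap G = 1 - G.invSqrtDegM * adjM G * G.invSqrtDegM := by
  rw [← G.invSqrtDegM_mul_degM_mul_invSqrtDegM hdeg, normLap, ← invSqrtDegM, Matrix.mul_sub,
    Matrix.sub_mul]

lemma invSqrtDegM_mulVec_eq_zero_iff (hdeg : ∀ v, 0 < G.degree v) (y : V → ℝ) :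
    G.invSqrtDegM *ᵥ y = 0 ↔ y = 0 := by
  have hs : ∀ v, (√(G.degree v : ℝ))⁻¹ ≠ 0 := fun v =>
    inv_ne_zero (Real.sqrt_pos.mpr (by exact_mod_cast hdeg v)).ne'
  simp only [invSqrtDegM, funext_iff, mulVec_diagonal, Pi.zero_apply, mul_eq_zero, hs,
    false_or]

lemma normLap_mulVec_eq_self_iff (hdeg : ∀ v, 0 < G.degree v) (y : V → ℝ) :
    normLap G *ᵥ y = y ↔ adjM G *ᵥ (G.invSqrtDegM *ᵥ y) = 0 := by
  rw [normLap_eq_one_sub G hdeg, sub_mulVec, one_mulVec, sub_eq_self, ← mulVec_mulVec,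
    ← mulVec_mulVec, invSqrtDegM_mulVec_eq_zero_iff G hdeg]

lemma normLap_mulVec_indicator_eq_self (hdeg : ∀ v, 0 < G.degree v) {S : Set V}
    (hS : ∀ u v, G.Adj u v → (u ∈ S ↔ v ∉ S)) {y : V → ℝ} (hy : normLap G *ᵥ y = y) :
    normLap G *ᵥ S.indicator y = S.indicator y := by
  rw [normLap_mulVec_eq_self_iff G hdeg] at hy
  rw [normLap_mulVec_eq_self_iff G hdeg, invSqrtDegM, diagonal_mulVec_indicator,
    ← invSqrtDegM, adjM_mulVec_indicator G hS, hy, Set.indicator_zero']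

end SimpleGraph

theorem stmt3_general {V : Type*} [Fintype V] (G : SimpleGraph V) (B C : Set V)
    (hdisj : Disjoint B C)
    (hbip : ∀ u v, G.Adj u v → (u ∈ B ∧ v ∈ C) ∨ (u ∈ C ∧ v ∈ B))
    (hdeg : ∀ v, 0 < G.degree v)
    (x : V → ℝ) (hev : (normLap G).mulVec x = x)
    (b c : V → ℝ)
    (hb : b = fun v => if v ∈ B then x v else 0)
    (hc : c = fun v => if v ∈ C then x v else 0) :
    (normLap G).mulVec b = b ∧ (normLap G).mulVec c = c := by
  have hB : ∀ u v, G.Adj u v → (u ∈ B ↔ v ∉ B) := fun u v huv => by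
    rcases hbip u v huv with ⟨hu, hv⟩ | ⟨hu, hv⟩
    · exact iff_of_true hu (hdisj.notMem_of_mem_right hv)
    · exact iff_of_false (hdisj.notMem_of_mem_right hu) (not_not.mpr hv)
  have hC : ∀ u v, G.Adj u v → (u ∈ C ↔ v ∉ C) := fun u v huv => by
    rcases hbip u v huv with ⟨hu, hv⟩ | ⟨hu, hv⟩
    · exact iff_of_false (hdisj.notMem_of_mem_left hu) (not_not.mpr hv)
    · exact iff_of_true hu (hdisj.notMem_of_mem_left hv)
  subst hb hc
  exact ⟨G.normLap_mulVec_indicator_eq_self hdeg hB hev,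
    G.normLap_mulVec_indicator_eq_self hdeg hC hev⟩

/-- In a bipartite graph with parts `B`, `C`, every vertex of positive degree, an eigenvector
of the normalized Laplacian for eigenvalue `1` splits as `x = b + c` with both pieces again
satisfying `ℒ b = b` and `ℒ c = c`. -/
theorem stmt3 {V : Type*} [Fintype V] (G : SimpleGraph V) (B C : Set V)
    (hBC : B ∪ C = Set.univ) (hdisj : Disjoint B C)
    (hbip : ∀ u v, G.Adj u v → (u ∈ B ∧ v ∈ C) ∨ (u ∈ C ∧ v ∈ B))
    (hdeg : ∀ v, 0 < G.degree v)
    (x : V → ℝ) (hx : x ≠ 0) (hev : (normLap G).mulVec x = x)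
    (b c : V → ℝ)
    (hb : b = fun v => if v ∈ B then x v else 0)
    (hc : c = fun v => if v ∈ C then x v else 0) :
    (normLap G).mulVec b = b ∧ (normLap G).mulVec c = c :=
  stmt3_general G B C hdisj hbip hdeg x hev b c hb hc
end

section
/- Let P₁ and P₂ be (k,ℓ)-biregular bipartite graphs on vertex set B ∪ C that are cospectral with respect to the adjacency matrix, such that the dimension of the kernel of the adjacency matrix intersected with the subspace of vectors supported on B is the same for both. Let G₁ and G₂ be the graphs obtained by attaching: an arbitrary graph on A ∪ A', a complete bipartite graph between A' and B, no edges inside B or C, no other edges to B ∪ C, and P₁ (respectively P₂) between B and C. Then for every real t, G₁ and G₂ are cospectral with respect to the matrix A + tD. -/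
open scoped Classical
/-!
Order the vertices as `X ⊔ B ⊔ C` with `X = (B ∪ C)ᶜ` and let `N` be the `B × C` biadjacency
matrix of `P`. Every vertex of `B` has degree `|A'| + k` and every vertex of `C` degree `ℓ` in
`G`, so `z - (A + tD)` is `[[E, -s 1ᵀ, 0], [-1 sᵀ, a, -N], [0, -Nᵀ, c]]`, where `s` is the
indicator of `A'`, `a = z - t (|A'| + k)` and `c = z - tℓ`. Taking the Schur complement of `c`
and then that of `a - c⁻¹ N Nᵀ`, whose row sums are all `a - kℓ/c`, gives
`det = c^|C| c^(-|B|) χ_{NNᵀ}(ac) det (E - w s sᵀ)` with `w = |B| / (a - kℓ/c)`.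
Hence `χ(A + tD)` depends on `P` only through `χ(N Nᵀ)`. The same identity for `A(P)` itself
(`t = 0`, `s = 0`) reads `χ_P(z) = z^(|X| + |C| - |B|) χ_{NNᵀ}(z²)`, so cospectral `P₁`, `P₂`
have the same `χ(N Nᵀ)`. All determinants are evaluated at the generic point `z = X` of `ℝ(X)`,
where every Schur complement is invertible.
-/

open Matrix Polynomial

theorem Matrix.aeval_charpoly_eq_det {n R K : Type*} [Fintype n] [DecidableEq n] [CommRing R]
    [CommRing K] [Algebra R K] (M : Matrix n n R) (z : K) :
    aeval z M.charpoly = (z • (1 : Matrix n n K) - M.map (algebraMap R K)).det := by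
  rw [aeval_def, eval₂_eq_eval_map, ← charpoly_map, eval_charpoly, smul_one_eq_diagonal]
  rfl

theorem Matrix.mul_transpose_mulVec_one {B C R : Type*} [Fintype B] [Fintype C] [CommSemiring R]
    {N : Matrix B C R} {k l : R} (hrow : N *ᵥ 1 = k • 1) (hcol : Nᵀ *ᵥ 1 = l • 1) :
    (N * Nᵀ) *ᵥ 1 = (k * l) • 1 := by
  rw [← mulVec_mulVec, hcol, mulVec_smul, hrow, smul_smul, mul_comm]

section BlockDeterminant

variable {m n K : Type*} [Fintype n] [DecidableEq n] [Field K]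

theorem Matrix.det_fromBlocks_smul_one₂₂ [Fintype m] [DecidableEq m] (A : Matrix m m K)
    (B : Matrix m n K) (C : Matrix n m K) {c : K} (hc : c ≠ 0) :
    (fromBlocks A B C (c • 1)).det = c ^ Fintype.card n * (A - c⁻¹ • (B * C)).det := by
  let _ : Invertible (c • (1 : Matrix n n K)) :=
    ⟨c⁻¹ • 1, by simp [smul_smul, hc], by simp [smul_smul, hc]⟩
  rw [det_fromBlocks₂₂, det_smul, det_one, mul_one]
  change _ * (A - B * (c⁻¹ • (1 : Matrix n n K)) * C).det = _
  rw [Matrix.mul_smul, Matrix.mul_one, Matrix.smul_mul]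

theorem Matrix.one_dotProduct_inv_mulVec_one {T : Matrix n n K} {σ : K} (hT : IsUnit T.det)
    (h : T *ᵥ 1 = σ • 1) : 1 ⬝ᵥ (T⁻¹ *ᵥ 1) = Fintype.card n / σ := by
  have hσ : σ • (T⁻¹ *ᵥ 1) = 1 := by
    rw [← mulVec_smul, ← h, mulVec_mulVec, nonsing_inv_mul _ hT, one_mulVec]
  rcases eq_or_ne σ 0 with rfl | hσ0
  · rw [zero_smul] at hσ
    rw [div_zero, ← hσ, zero_dotProduct]
  · rw [eq_div_iff hσ0, mul_comm, ← smul_eq_mul, ← dotProduct_smul, hσ]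
    simp

theorem Matrix.vecMulVec_one_mul_inv_mul_vecMulVec_one {T : Matrix n n K} {σ : K}
    (hT : IsUnit T.det) (h : T *ᵥ 1 = σ • 1) (s : m → K) :
    (vecMulVec s (1 : n → K) : Matrix m n K) * T⁻¹ * vecMulVec (1 : n → K) s =
      (Fintype.card n / σ) • vecMulVec s s := by
  rw [Matrix.mul_assoc, mul_vecMulVec, vecMulVec_mul_vecMulVec,
    one_dotProduct_inv_mulVec_one hT h, vecMulVec_smul]

theorem Matrix.det_fromBlocks_attached {X B C : Type*} [Fintype X] [Fintype B] [Fintype C]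
    [DecidableEq X] [DecidableEq B] [DecidableEq C] (E : Matrix X X K) (s : X → K)
    (N : Matrix B C K) {a c μ : K} (hc : c ≠ 0) (hN : (N * Nᵀ) *ᵥ 1 = μ • 1)
    (hW : ((a * c) • 1 - N * Nᵀ).det ≠ 0) :
    (fromBlocks (fromBlocks E (-vecMulVec s 1) (-vecMulVec 1 s) (a • 1))
      (fromRows 0 (-N)) (fromCols 0 (-Nᵀ)) (c • 1)).det =
      c ^ Fintype.card C * c⁻¹ ^ Fintype.card B * ((a * c) • 1 - N * Nᵀ).det *
        (E - (Fintype.card B / (a - c⁻¹ * μ)) • vecMulVec s s).det := by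
  set T : Matrix B B K := a • 1 - c⁻¹ • (N * Nᵀ) with hT
  have hdetT : T.det = c⁻¹ ^ Fintype.card B * ((a * c) • 1 - N * Nᵀ).det := by
    rw [← det_smul, hT, smul_sub, smul_smul, mul_comm a c, inv_mul_cancel_left₀ hc]
  have hTunit : IsUnit T.det := by
    rw [hdetT]
    exact (mul_ne_zero (pow_ne_zero _ (inv_ne_zero hc)) hW).isUnit
  have hT1 : T *ᵥ 1 = (a - c⁻¹ * μ) • 1 := by
    rw [hT, sub_mulVec, smul_mulVec, one_mulVec, smul_mulVec, hN, smul_smul, sub_smul]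
  have hschur : fromBlocks E (-vecMulVec s 1) (-vecMulVec 1 s) (a • 1) -
      c⁻¹ • (fromRows 0 (-N) * fromCols 0 (-Nᵀ)) =
      fromBlocks E (-vecMulVec s 1) (-vecMulVec 1 s) T := by
    rw [fromRows_mul_fromCols]
    ext (i | i) (j | j) <;> simp [hT]
  let _ := invertibleOfIsUnitDet T hTunit
  rw [det_fromBlocks_smul_one₂₂ _ _ _ hc, hschur, det_fromBlocks₂₂, invOf_eq_nonsing_inv,
    Matrix.neg_mul, Matrix.neg_mul, Matrix.mul_neg, neg_neg,
    vecMulVec_one_mul_inv_mul_vecMulVec_one hTunit hT1, hdetT]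
  ring

end BlockDeterminant

noncomputable def blockEquiv {V : Type*} {SB SC : Set V} (hBC : Disjoint SB SC) :
    (↥(SB ∪ SC)ᶜ ⊕ ↥SB) ⊕ ↥SC ≃ V :=
  (Equiv.sumAssoc _ _ _).trans <| (Equiv.sumComm _ _).trans <|
    (Equiv.sumCongr (Equiv.Set.union hBC).symm (Equiv.refl _)).trans (Equiv.Set.sumCompl _)

section BlockEquiv

variable {V : Type*} {SB SC : Set V} (hBC : Disjoint SB SC)

@[simp] theorem blockEquiv_inl_inl (x : ↥(SB ∪ SC)ᶜ) : blockEquiv hBC (.inl (.inl x)) = x := rfl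

@[simp] theorem blockEquiv_inl_inr (b : SB) : blockEquiv hBC (.inl (.inr b)) = b := rfl

@[simp] theorem blockEquiv_inr (c : SC) : blockEquiv hBC (.inr c) = c := rfl

end BlockEquiv

/-- With respect to `V = (B ∪ C)ᶜ ⊔ B ⊔ C`, the matrix `M` is
`[[M_X, s 1ᵀ, 0], [1 sᵀ, β, N], [0, Nᵀ, γ]]`. -/
structure Matrix.HasAttachedBlocks {V R : Type*} [Zero R] (M : Matrix V V R) (SB SC : Set V)
    (s : ↥(SB ∪ SC)ᶜ → R) (N : Matrix SB SC R) (β γ : R) : Prop where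
  isSymm : M.IsSymm
  apply_compl_B : ∀ (x : ↥(SB ∪ SC)ᶜ) (b : SB), M x b = s x
  apply_compl_C : ∀ (x : ↥(SB ∪ SC)ᶜ) (c : SC), M x c = 0
  apply_B_B : ∀ b b' : SB, M b b' = if b = b' then β else 0
  apply_B_C : ∀ (b : SB) (c : SC), M b c = N b c
  apply_C_C : ∀ c c' : SC, M c c' = if c = c' then γ else 0

namespace Matrix.HasAttachedBlocks

section Entries

variable {V R : Type*} [Zero R] {M : Matrix V V R} {SB SC : Set V} {s : ↥(SB ∪ SC)ᶜ → R}
  {N : Matrix SB SC R} {β γ : R}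

theorem apply_B_compl (hM : M.HasAttachedBlocks SB SC s N β γ) (b : SB) (x : ↥(SB ∪ SC)ᶜ) :
    M b x = s x := by
  rw [hM.isSymm.apply, hM.apply_compl_B]

theorem apply_C_compl (hM : M.HasAttachedBlocks SB SC s N β γ) (c : SC) (x : ↥(SB ∪ SC)ᶜ) :
    M c x = 0 := by
  rw [hM.isSymm.apply, hM.apply_compl_C]

theorem apply_C_B (hM : M.HasAttachedBlocks SB SC s N β γ) (c : SC) (b : SB) :
    M c b = N b c := by
  rw [hM.isSymm.apply, hM.apply_B_C]

end Entries

theorem aeval_charpoly {V R K : Type*} [Fintype V] [CommRing R] [Field K] [Algebra R K]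
    {M : Matrix V V R} {SB SC : Set V} {s : ↥(SB ∪ SC)ᶜ → R} {N : Matrix SB SC R} {β γ μ : R}
    (hM : M.HasAttachedBlocks SB SC s N β γ) (hBC : Disjoint SB SC)
    (hN : (N * Nᵀ) *ᵥ 1 = μ • 1) {z : K} (hc : z - algebraMap R K γ ≠ 0)
    (hW : aeval ((z - algebraMap R K β) * (z - algebraMap R K γ)) (N * Nᵀ).charpoly ≠ 0) :
    aeval z M.charpoly =
      (z - algebraMap R K γ) ^ Fintype.card SC * (z - algebraMap R K γ)⁻¹ ^ Fintype.card SB *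
        aeval ((z - algebraMap R K β) * (z - algebraMap R K γ)) (N * Nᵀ).charpoly *
        (z • 1 - (M.submatrix (↑) (↑) : Matrix ↥(SB ∪ SC)ᶜ ↥(SB ∪ SC)ᶜ R).map (algebraMap R K) -
          (Fintype.card SB /
              (z - algebraMap R K β - (z - algebraMap R K γ)⁻¹ * algebraMap R K μ)) •
            vecMulVec (algebraMap R K ∘ s) (algebraMap R K ∘ s)).det := by
  set φ := algebraMap R K
  set e := blockEquiv hBC
  have hgram : N.map φ * (N.map φ)ᵀ = (N * Nᵀ).map φ := by
    rw [Matrix.map_mul, transpose_map]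
  have hN' : (N.map φ * (N.map φ)ᵀ) *ᵥ 1 = φ μ • 1 := by
    ext b
    have h1 : φ ∘ (1 : SB → R) = 1 := by ext; simp
    rw [hgram, ← h1, ← RingHom.map_mulVec, hN]
    simp
  have hW' : (((z - φ β) * (z - φ γ)) • 1 - N.map φ * (N.map φ)ᵀ).det ≠ 0 := by
    rwa [hgram, ← aeval_charpoly_eq_det]
  have hblocks : z • 1 - (M.submatrix e e).map φ =
      fromBlocks
        (fromBlocks (z • 1 - (M.submatrix (↑) (↑) : Matrix ↥(SB ∪ SC)ᶜ ↥(SB ∪ SC)ᶜ R).map φ)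
          (-vecMulVec (φ ∘ s) 1) (-vecMulVec 1 (φ ∘ s)) ((z - φ β) • 1))
        (fromRows 0 (-N.map φ)) (fromCols 0 (-(N.map φ)ᵀ)) ((z - φ γ) • 1) := by
    ext ((x | b) | c) ((x' | b') | c')
    all_goals
      simp only [e, blockEquiv_inl_inl, blockEquiv_inl_inr, blockEquiv_inr, sub_apply, smul_apply,
        one_apply, map_apply, submatrix_apply, hM.apply_compl_B, hM.apply_compl_C, hM.apply_B_B,
        hM.apply_B_C, hM.apply_C_C, hM.apply_B_compl, hM.apply_C_compl, hM.apply_C_B]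
      split_ifs <;> simp_all
  rw [← charpoly_reindex e.symm, aeval_charpoly_eq_det, reindex_apply, Equiv.symm_symm, hblocks,
    det_fromBlocks_attached _ _ _ hc hN' hW', hgram, ← aeval_charpoly_eq_det]

end Matrix.HasAttachedBlocks

section RatFunc

variable {F : Type*} [Field F]

theorem RatFunc.aeval_algebraMap_ne_zero {p q : F[X]} (hp : p.Monic) (hq : q.Monic)
    (hq0 : q.natDegree ≠ 0) : aeval (algebraMap F[X] (RatFunc F) q) p ≠ 0 := by
  rw [aeval_algebraMap_apply, ← comp_eq_aeval]
  exact (map_ne_zero_iff _ (algebraMap_injective F)).mpr (hp.comp hq hq0).ne_zero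

theorem RatFunc.X_sub_algebraMap (γ : F) :
    (RatFunc.X : RatFunc F) - algebraMap F (RatFunc F) γ =
      algebraMap F[X] (RatFunc F) (Polynomial.X - Polynomial.C γ) := by
  simp

theorem RatFunc.X_sub_algebraMap_ne_zero (γ : F) :
    (RatFunc.X : RatFunc F) - algebraMap F (RatFunc F) γ ≠ 0 := by
  rw [X_sub_algebraMap]
  exact (map_ne_zero_iff _ (algebraMap_injective F)).mpr (X_sub_C_ne_zero γ)

theorem RatFunc.aeval_X_sub_mul_X_sub_ne_zero {p : F[X]} (hp : p.Monic) (β γ : F) :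
    aeval ((RatFunc.X - algebraMap F (RatFunc F) β) * (RatFunc.X - algebraMap F (RatFunc F) γ))
      p ≠ 0 := by
  rw [X_sub_algebraMap, X_sub_algebraMap, ← map_mul]
  refine aeval_algebraMap_ne_zero hp ((monic_X_sub_C β).mul (monic_X_sub_C γ)) ?_
  rw [natDegree_mul (X_sub_C_ne_zero β) (X_sub_C_ne_zero γ)]
  simp

end RatFunc

namespace Matrix.HasAttachedBlocks

variable {V F : Type*} [Fintype V] [Field F] {M₁ M₂ : Matrix V V F} {SB SC : Set V}
  {N₁ N₂ : Matrix SB SC F}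

theorem charpoly_eq {s : ↥(SB ∪ SC)ᶜ → F} {β γ μ : F}
    (h₁ : M₁.HasAttachedBlocks SB SC s N₁ β γ) (h₂ : M₂.HasAttachedBlocks SB SC s N₂ β γ)
    (hBC : Disjoint SB SC) (hN₁ : (N₁ * N₁ᵀ) *ᵥ 1 = μ • 1) (hN₂ : (N₂ * N₂ᵀ) *ᵥ 1 = μ • 1)
    (hX : (M₁.submatrix (↑) (↑) : Matrix ↥(SB ∪ SC)ᶜ ↥(SB ∪ SC)ᶜ F) = M₂.submatrix (↑) (↑))
    (hgram : (N₁ * N₁ᵀ).charpoly = (N₂ * N₂ᵀ).charpoly) : M₁.charpoly = M₂.charpoly := by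
  apply RatFunc.algebraMap_injective F
  have hc := RatFunc.X_sub_algebraMap_ne_zero γ
  rw [← RatFunc.aeval_X_left_eq_algebraMap, ← RatFunc.aeval_X_left_eq_algebraMap,
    h₁.aeval_charpoly hBC hN₁ hc (RatFunc.aeval_X_sub_mul_X_sub_ne_zero (charpoly_monic _) β γ),
    h₂.aeval_charpoly hBC hN₂ hc (RatFunc.aeval_X_sub_mul_X_sub_ne_zero (charpoly_monic _) β γ),
    hgram, hX]

theorem charpoly_mul_transpose_eq {μ : F} (h₁ : M₁.HasAttachedBlocks SB SC 0 N₁ 0 0)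
    (h₂ : M₂.HasAttachedBlocks SB SC 0 N₂ 0 0) (hBC : Disjoint SB SC)
    (hN₁ : (N₁ * N₁ᵀ) *ᵥ 1 = μ • 1) (hN₂ : (N₂ * N₂ᵀ) *ᵥ 1 = μ • 1)
    (hX : (M₁.submatrix (↑) (↑) : Matrix ↥(SB ∪ SC)ᶜ ↥(SB ∪ SC)ᶜ F) = M₂.submatrix (↑) (↑))
    (hM : M₁.charpoly = M₂.charpoly) : (N₁ * N₁ᵀ).charpoly = (N₂ * N₂ᵀ).charpoly := by
  have hc := RatFunc.X_sub_algebraMap_ne_zero (0 : F)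
  have key := congrArg (aeval (RatFunc.X : RatFunc F)) hM
  rw [h₁.aeval_charpoly hBC hN₁ hc (RatFunc.aeval_X_sub_mul_X_sub_ne_zero (charpoly_monic _) 0 0),
    h₂.aeval_charpoly hBC hN₂ hc (RatFunc.aeval_X_sub_mul_X_sub_ne_zero (charpoly_monic _) 0 0),
    hX] at key
  have hs : algebraMap F (RatFunc F) ∘ (0 : ↥(SB ∪ SC)ᶜ → F) = 0 := by ext; simp
  rw [hs, zero_vecMulVec, smul_zero, sub_zero, ← aeval_charpoly_eq_det, map_zero, sub_zero] at key
  -- `key : X^|C| X^(-|B|) χ(N₁N₁ᵀ)(X²) χ(M_X)(X) = X^|C| X^(-|B|) χ(N₂N₂ᵀ)(X²) χ(M_X)(X)`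
  have hD := RatFunc.aeval_algebraMap_ne_zero (charpoly_monic (M₂.submatrix (↑) (↑) :
    Matrix ↥(SB ∪ SC)ᶜ ↥(SB ∪ SC)ᶜ F)) monic_X (by simp)
  rw [RatFunc.algebraMap_X] at hD
  have hpow : (RatFunc.X : RatFunc F) ^ Fintype.card SC * RatFunc.X⁻¹ ^ Fintype.card SB ≠ 0 :=
    mul_ne_zero (pow_ne_zero _ RatFunc.X_ne_zero) (pow_ne_zero _ (inv_ne_zero RatFunc.X_ne_zero))
  have key' := mul_left_cancel₀ hpow (mul_right_cancel₀ hD key)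
  rw [← sq, ← expand_aeval, ← expand_aeval, RatFunc.aeval_X_left_eq_algebraMap,
    RatFunc.aeval_X_left_eq_algebraMap] at key'
  exact expand_injective two_pos (RatFunc.algebraMap_injective F key')

end Matrix.HasAttachedBlocks

section Graph

variable {V : Type*} [Fintype V]

theorem adjM_add_smul_degM_apply (G : SimpleGraph V) (t : ℝ) (u v : V) :
    (adjM G + t • degM G) u v =
      (if G.Adj u v then 1 else 0) + if u = v then t * G.degree u else 0 := by
  simp [adjM, degM, diagonal_apply]

theorem isSymm_adjM_add_smul_degM (G : SimpleGraph V) (t : ℝ) : (adjM G + t • degM G).IsSymm :=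
  (IsSymm.ext fun u v => by simp [adjM, G.adj_comm]).add ((isSymm_diagonal _).smul t)

theorem sum_adjM_subtype_eq_degree (G : SimpleGraph V) {S : Set V} {v : V}
    (hS : ∀ w, G.Adj v w → w ∈ S) : ∑ w : S, adjM G v w = G.degree v := by
  rw [Finset.sum_set_coe, Finset.sum_subset (Finset.subset_univ _)]
  · simp [adjM, Finset.sum_boole, ← SimpleGraph.card_neighborFinset_eq_degree,
      SimpleGraph.neighborFinset_eq_filter]
  · intro w _ hw
    simpa [adjM] using fun h => hw (Set.mem_toFinset.mpr (hS w h))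

end Graph

structure SimpleGraph.IsAttachment {V : Type*} (G H P : SimpleGraph V) (SA' SB SC : Set V) :
    Prop where
  disjoint_B_C : Disjoint SB SC
  disjoint_A'_B : Disjoint SA' SB
  disjoint_A'_C : Disjoint SA' SC
  not_mem_of_adj_H : ∀ u v, H.Adj u v → u ∉ SB ∪ SC
  mem_of_adj_P : ∀ u v, P.Adj u v → u ∈ SB ∧ v ∈ SC ∨ u ∈ SC ∧ v ∈ SB
  adj_iff : ∀ u v, G.Adj u v ↔ H.Adj u v ∨ (u ∈ SA' ∧ v ∈ SB) ∨ (u ∈ SB ∧ v ∈ SA') ∨ P.Adj u v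

namespace SimpleGraph.IsAttachment

variable {V : Type*} {G H P : SimpleGraph V} {SA' SB SC : Set V}

theorem self (hBC : Disjoint SB SC)
    (hP : ∀ u v, P.Adj u v → u ∈ SB ∧ v ∈ SC ∨ u ∈ SC ∧ v ∈ SB) : P.IsAttachment ⊥ P ∅ SB SC :=
  ⟨hBC, Set.empty_disjoint _, Set.empty_disjoint _, fun _ _ h => h.elim, hP, by simp⟩

theorem adj_iff_of_not_mem (hG : G.IsAttachment H P SA' SB SC) {u : V} (hu : u ∉ SB ∪ SC)
    (v : V) : G.Adj u v ↔ H.Adj u v ∨ (u ∈ SA' ∧ v ∈ SB) := by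
  have := hG.mem_of_adj_P u v
  rw [Set.mem_union, not_or] at hu
  rw [hG.adj_iff]
  tauto

theorem adj_iff_of_mem_B (hG : G.IsAttachment H P SA' SB SC) {b : V} (hb : b ∈ SB) (v : V) :
    G.Adj b v ↔ v ∈ SA' ∨ P.Adj b v := by
  have : ¬H.Adj b v := fun h => hG.not_mem_of_adj_H b v h (Or.inl hb)
  have : b ∉ SA' := fun h => Set.disjoint_left.mp hG.disjoint_A'_B h hb
  rw [hG.adj_iff]
  tauto

theorem adj_iff_of_mem_C (hG : G.IsAttachment H P SA' SB SC) {c : V} (hc : c ∈ SC) (v : V) :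
    G.Adj c v ↔ P.Adj c v := by
  have : ¬H.Adj c v := fun h => hG.not_mem_of_adj_H c v h (Or.inr hc)
  have : c ∉ SA' := fun h => Set.disjoint_left.mp hG.disjoint_A'_C h hc
  have : c ∉ SB := fun h => Set.disjoint_left.mp hG.disjoint_B_C h hc
  rw [hG.adj_iff]
  tauto

theorem adj_P_of_mem_B (hG : G.IsAttachment H P SA' SB SC) {b v : V} (hb : b ∈ SB)
    (h : P.Adj b v) : v ∈ SC := by
  rcases hG.mem_of_adj_P b v h with ⟨-, hv⟩ | ⟨hb', -⟩
  · exact hv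
  · exact absurd hb' (Set.disjoint_left.mp hG.disjoint_B_C hb)

theorem adj_P_of_mem_C (hG : G.IsAttachment H P SA' SB SC) {c v : V} (hc : c ∈ SC)
    (h : P.Adj c v) : v ∈ SB := by
  rcases hG.mem_of_adj_P c v h with ⟨hc', -⟩ | ⟨-, hv⟩
  · exact absurd hc (Set.disjoint_left.mp hG.disjoint_B_C hc')
  · exact hv

end SimpleGraph.IsAttachment

theorem SimpleGraph.degree_eq_of_forall_adj_iff {V : Type*} [Fintype V] {G₁ G₂ : SimpleGraph V}
    {v : V} (h : ∀ w, G₁.Adj v w ↔ G₂.Adj v w) : G₁.degree v = G₂.degree v := by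
  rw [← card_neighborFinset_eq_degree, ← card_neighborFinset_eq_degree]
  congr 1
  ext w
  simp [h w]

noncomputable def biadjM {V : Type*} [Fintype V] (P : SimpleGraph V) (SB SC : Set V) :
    Matrix SB SC ℝ :=
  (adjM P).submatrix (↑) (↑)

namespace SimpleGraph.IsAttachment

variable {V : Type*} [Fintype V] {G H P : SimpleGraph V} {SA' SB SC : Set V}

theorem degree_of_mem_B (hG : G.IsAttachment H P SA' SB SC) {b : V} (hb : b ∈ SB) :
    G.degree b = SA'.toFinset.card + P.degree b := by
  have hunion : G.neighborFinset b = SA'.toFinset ∪ P.neighborFinset b := by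
    ext v
    simp [hG.adj_iff_of_mem_B hb]
  have hdisj : Disjoint SA'.toFinset (P.neighborFinset b) :=
    Finset.disjoint_left.mpr fun v hv hP => Set.disjoint_left.mp hG.disjoint_A'_C
      (Set.mem_toFinset.mp hv) (hG.adj_P_of_mem_B hb ((mem_neighborFinset _ _ _).mp hP))
  rw [← card_neighborFinset_eq_degree, hunion, Finset.card_union_of_disjoint hdisj,
    card_neighborFinset_eq_degree]

theorem degree_of_mem_C (hG : G.IsAttachment H P SA' SB SC) {c : V} (hc : c ∈ SC) :
    G.degree c = P.degree c :=
  degree_eq_of_forall_adj_iff (hG.adj_iff_of_mem_C hc)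

theorem hasAttachedBlocks (hG : G.IsAttachment H P SA' SB SC) (t : ℝ) {k l : ℕ}
    (hdegB : ∀ b ∈ SB, P.degree b = k) (hdegC : ∀ c ∈ SC, P.degree c = l) :
    (adjM G + t • degM G).HasAttachedBlocks SB SC (SA'.indicator 1 ∘ (↑))
      (biadjM P SB SC) (t * (SA'.toFinset.card + k)) (t * l) where
  isSymm := isSymm_adjM_add_smul_degM G t
  apply_compl_B x b := by
    have hx : (x : V) ∉ SB ∪ SC := x.2
    have hne : (x : V) ≠ b := fun h => hx (h ▸ Or.inl b.2)
    have hH : ¬H.Adj x b := fun h => hG.not_mem_of_adj_H b x h.symm (Or.inl b.2)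
    rw [adjM_add_smul_degM_apply]
    simp [hne, hG.adj_iff_of_not_mem hx, hH, Set.indicator_apply]
  apply_compl_C x c := by
    have hx : (x : V) ∉ SB ∪ SC := x.2
    have hne : (x : V) ≠ c := fun h => hx (h ▸ Or.inr c.2)
    have hH : ¬H.Adj x c := fun h => hG.not_mem_of_adj_H c x h.symm (Or.inr c.2)
    have hc : (c : V) ∉ SB := fun h => Set.disjoint_left.mp hG.disjoint_B_C h c.2
    rw [adjM_add_smul_degM_apply]
    simp [hne, hG.adj_iff_of_not_mem hx, hH, hc]
  apply_B_B b b' := by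
    have hA' : (b' : V) ∉ SA' := fun h => Set.disjoint_left.mp hG.disjoint_A'_B h b'.2
    have hP : ¬P.Adj b b' := fun h => Set.disjoint_left.mp hG.disjoint_B_C b'.2
      (hG.adj_P_of_mem_B b.2 h)
    rw [adjM_add_smul_degM_apply]
    simp [hG.adj_iff_of_mem_B b.2, hA', hP, hG.degree_of_mem_B b.2,
      hdegB b b.2, Subtype.ext_iff]
  apply_B_C b c := by
    have hA' : (c : V) ∉ SA' := fun h => Set.disjoint_left.mp hG.disjoint_A'_C h c.2
    have hne : (b : V) ≠ c := fun h => Set.disjoint_left.mp hG.disjoint_B_C b.2 (h ▸ c.2)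
    rw [adjM_add_smul_degM_apply]
    simp [hG.adj_iff_of_mem_B b.2, hA', hne, biadjM, adjM]
  apply_C_C c c' := by
    have hP : ¬P.Adj c c' := fun h => Set.disjoint_left.mp hG.disjoint_B_C
      (hG.adj_P_of_mem_C c.2 h) c'.2
    rw [adjM_add_smul_degM_apply]
    simp [hG.adj_iff_of_mem_C c.2, hP, hG.degree_of_mem_C c.2,
      hdegC c c.2, Subtype.ext_iff]

theorem submatrix_compl_eq {G' P' : SimpleGraph V} (hG : G.IsAttachment H P SA' SB SC)
    (hG' : G'.IsAttachment H P' SA' SB SC) (t : ℝ) :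
    ((adjM G + t • degM G).submatrix (↑) (↑) : Matrix ↥(SB ∪ SC)ᶜ ↥(SB ∪ SC)ᶜ ℝ) =
      (adjM G' + t • degM G').submatrix (↑) (↑) := by
  have hadj (x : ↥(SB ∪ SC)ᶜ) (v : V) : G.Adj x v ↔ G'.Adj x v := by
    rw [hG.adj_iff_of_not_mem x.2, hG'.adj_iff_of_not_mem x.2]
  ext x y
  rw [submatrix_apply, submatrix_apply, adjM_add_smul_degM_apply, adjM_add_smul_degM_apply]
  simp [hadj, degree_eq_of_forall_adj_iff (hadj x)]

theorem biadj_mul_transpose_mulVec_one (hG : G.IsAttachment H P SA' SB SC) {k l : ℕ}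
    (hdegB : ∀ b ∈ SB, P.degree b = k) (hdegC : ∀ c ∈ SC, P.degree c = l) :
    (biadjM P SB SC * (biadjM P SB SC)ᵀ) *ᵥ 1 = ((k : ℝ) * l) • 1 := by
  refine mul_transpose_mulVec_one (funext fun b => ?_) (funext fun c => ?_)
  · rw [← hdegB b b.2, ← sum_adjM_subtype_eq_degree P fun w => hG.adj_P_of_mem_B b.2]
    simp [biadjM, mulVec, dotProduct]
  · rw [← hdegC c c.2, ← sum_adjM_subtype_eq_degree P fun w => hG.adj_P_of_mem_C c.2]
    simp [biadjM, mulVec, dotProduct, adjM, P.adj_comm]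

end SimpleGraph.IsAttachment

theorem SimpleGraph.charpoly_biadjM_mul_transpose_eq {V : Type*} [Fintype V]
    {P₁ P₂ : SimpleGraph V} {SB SC : Set V} {k l : ℕ} (hBC : Disjoint SB SC)
    (hP₁ : ∀ u v, P₁.Adj u v → u ∈ SB ∧ v ∈ SC ∨ u ∈ SC ∧ v ∈ SB)
    (hP₂ : ∀ u v, P₂.Adj u v → u ∈ SB ∧ v ∈ SC ∨ u ∈ SC ∧ v ∈ SB)
    (hP₁B : ∀ v ∈ SB, P₁.degree v = k) (hP₁C : ∀ v ∈ SC, P₁.degree v = l)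
    (hP₂B : ∀ v ∈ SB, P₂.degree v = k) (hP₂C : ∀ v ∈ SC, P₂.degree v = l)
    (hcospec : (adjM P₁).charpoly = (adjM P₂).charpoly) :
    (biadjM P₁ SB SC * (biadjM P₁ SB SC)ᵀ).charpoly =
      (biadjM P₂ SB SC * (biadjM P₂ SB SC)ᵀ).charpoly := by
  have h₁ := IsAttachment.self hBC hP₁
  have h₂ := IsAttachment.self hBC hP₂
  have hX := h₁.submatrix_compl_eq h₂ 0
  have hM₁ := h₁.hasAttachedBlocks 0 hP₁B hP₁C
  have hM₂ := h₂.hasAttachedBlocks 0 hP₂B hP₂C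
  simp only [zero_smul, add_zero, zero_mul, Set.indicator_empty] at hX hM₁ hM₂
  exact hM₁.charpoly_mul_transpose_eq hM₂ hBC (h₁.biadj_mul_transpose_mulVec_one hP₁B hP₁C)
    (h₂.biadj_mul_transpose_mulVec_one hP₂B hP₂C) hX hcospec

theorem stmt11_general {V : Type*} [Fintype V] (SA SA' SB SC : Set V)
    (hd2 : Disjoint SA SB) (hd3 : Disjoint SA SC)
    (hd4 : Disjoint SA' SB) (hd5 : Disjoint SA' SC) (hd6 : Disjoint SB SC)
    (k l : ℕ)
    (P₁ P₂ : SimpleGraph V)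
    (hP₁bip : ∀ u v, P₁.Adj u v → (u ∈ SB ∧ v ∈ SC) ∨ (u ∈ SC ∧ v ∈ SB))
    (hP₂bip : ∀ u v, P₂.Adj u v → (u ∈ SB ∧ v ∈ SC) ∨ (u ∈ SC ∧ v ∈ SB))
    (hP₁degB : ∀ v ∈ SB, P₁.degree v = k) (hP₁degC : ∀ v ∈ SC, P₁.degree v = l)
    (hP₂degB : ∀ v ∈ SB, P₂.degree v = k) (hP₂degC : ∀ v ∈ SC, P₂.degree v = l)
    (hPcospec : (adjM P₁).charpoly = (adjM P₂).charpoly)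
    (H : SimpleGraph V)
    (hH : ∀ u v, H.Adj u v → u ∈ SA ∪ SA' ∧ v ∈ SA ∪ SA')
    (G₁ G₂ : SimpleGraph V)
    (hG₁ : ∀ u v, G₁.Adj u v ↔
      H.Adj u v ∨ (u ∈ SA' ∧ v ∈ SB) ∨ (u ∈ SB ∧ v ∈ SA') ∨ P₁.Adj u v)
    (hG₂ : ∀ u v, G₂.Adj u v ↔
      H.Adj u v ∨ (u ∈ SA' ∧ v ∈ SB) ∨ (u ∈ SB ∧ v ∈ SA') ∨ P₂.Adj u v) :
    ∀ t : ℝ, (adjM G₁ + t • degM G₁).charpoly = (adjM G₂ + t • degM G₂).charpoly := by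
  intro t
  have hH_BC (u v : V) (h : H.Adj u v) : u ∉ SB ∪ SC :=
    Set.disjoint_left.mp ((hd2.union_right hd3).union_left (hd4.union_right hd5)) (hH u v h).1
  have h₁ : G₁.IsAttachment H P₁ SA' SB SC := ⟨hd6, hd4, hd5, hH_BC, hP₁bip, hG₁⟩
  have h₂ : G₂.IsAttachment H P₂ SA' SB SC := ⟨hd6, hd4, hd5, hH_BC, hP₂bip, hG₂⟩
  have hgram := SimpleGraph.charpoly_biadjM_mul_transpose_eq hd6 hP₁bip hP₂bip
    hP₁degB hP₁degC hP₂degB hP₂degC hPcospec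
  exact (h₁.hasAttachedBlocks t hP₁degB hP₁degC).charpoly_eq
    (h₂.hasAttachedBlocks t hP₂degB hP₂degC) hd6
    (h₁.biadj_mul_transpose_mulVec_one hP₁degB hP₁degC)
    (h₂.biadj_mul_transpose_mulVec_one hP₂degB hP₂degC) (h₁.submatrix_compl_eq h₂ t) hgram

/-- Biregular bipartite swapping: if `P₁`, `P₂` are `(k,ℓ)`-biregular bipartite graphs
between `B` and `C`, cospectral for the adjacency matrix, with equal dimensions of the
adjacency kernel intersected with the vectors supported on `B`, then the attached graphs
`G₁`, `G₂` are cospectral with respect to `A + tD` for every real `t`. -/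
theorem stmt11 {V : Type*} [Fintype V] (SA SA' SB SC : Set V)
    (hd1 : Disjoint SA SA') (hd2 : Disjoint SA SB) (hd3 : Disjoint SA SC)
    (hd4 : Disjoint SA' SB) (hd5 : Disjoint SA' SC) (hd6 : Disjoint SB SC)
    (hcover : SA ∪ SA' ∪ SB ∪ SC = Set.univ)
    (k l : ℕ) (hk : 1 ≤ k) (hl : 1 ≤ l)
    (P₁ P₂ : SimpleGraph V)
    (hP₁bip : ∀ u v, P₁.Adj u v → (u ∈ SB ∧ v ∈ SC) ∨ (u ∈ SC ∧ v ∈ SB))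
    (hP₂bip : ∀ u v, P₂.Adj u v → (u ∈ SB ∧ v ∈ SC) ∨ (u ∈ SC ∧ v ∈ SB))
    (hP₁degB : ∀ v ∈ SB, P₁.degree v = k) (hP₁degC : ∀ v ∈ SC, P₁.degree v = l)
    (hP₂degB : ∀ v ∈ SB, P₂.degree v = k) (hP₂degC : ∀ v ∈ SC, P₂.degree v = l)
    (hPcospec : (adjM P₁).charpoly = (adjM P₂).charpoly)
    (hdim : Module.finrank ℝ
        ↥(LinearMap.ker (adjM P₁).mulVecLin ⊓
          ⨅ v ∈ SBᶜ, LinearMap.ker (LinearMap.proj v : (V → ℝ) →ₗ[ℝ] ℝ)) =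
      Module.finrank ℝ
        ↥(LinearMap.ker (adjM P₂).mulVecLin ⊓
          ⨅ v ∈ SBᶜ, LinearMap.ker (LinearMap.proj v : (V → ℝ) →ₗ[ℝ] ℝ)))
    (H : SimpleGraph V)
    (hH : ∀ u v, H.Adj u v → u ∈ SA ∪ SA' ∧ v ∈ SA ∪ SA')
    (G₁ G₂ : SimpleGraph V)
    (hG₁ : ∀ u v, G₁.Adj u v ↔
      H.Adj u v ∨ (u ∈ SA' ∧ v ∈ SB) ∨ (u ∈ SB ∧ v ∈ SA') ∨ P₁.Adj u v)
    (hG₂ : ∀ u v, G₂.Adj u v ↔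
      H.Adj u v ∨ (u ∈ SA' ∧ v ∈ SB) ∨ (u ∈ SB ∧ v ∈ SA') ∨ P₂.Adj u v) :
    ∀ t : ℝ, (adjM G₁ + t • degM G₁).charpoly = (adjM G₂ + t • degM G₂).charpoly :=
  stmt11_general SA SA' SB SC hd2 hd3 hd4 hd5 hd6 k l P₁ P₂ hP₁bip hP₂bip hP₁degB hP₁degC hP₂degB
    hP₂degC hPcospec H hH G₁ G₂ hG₁ hG₂
end

section
/- Let P be a bipartite graph with parts B and C in which every vertex of B has degree k ≥ 1, and let x = b + c be an eigenvector of the normalized Laplacian of P with eigenvalue λ. Form the graph G from P by adding a set A' of new vertices joined completely to B (and all vertices of B now have degree s = k + |A'|), keeping P between B and C and no other edges. If b is orthogonal to 1_B (in the unweighted inner product), then the vector ŷ with ŷ = b on B, ŷ = √(s/k)·c' on C (where c' is the harmonic version of c), and 0 on A', extended appropriately, witnesses that γ = 1 − (1−λ)√(k/s) is an eigenvalue of the normalized Laplacian of G. -/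
open scoped Classical
/-!
The eigenvector `x` of `P` is itself an eigenvector for `G`. In harmonic form `y = D^{-1/2} x`
the eigen-equation at `v` reads `∑_{u ∼ v} y u = (1 - λ) √(d v) x v`. Passing from `P` to `G`
raises the degrees on `B` from `k` to `s` and keeps those on `C`. So at a `C`-vertex the
neighbour sum is scaled by `√(k/s)`, and at a `B`-vertex it is unchanged (the new neighbours lie
in `A'`, where `x = 0`) while `√(d v)` grows by `√(s/k)`: in both cases `1 - λ` becomes
`(1 - λ) √(k/s)`. At a vertex of `A'`, `x = 0` and the neighbour sum is `s^{-1/2} ∑_B x = 0`.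
-/

open Finset Matrix

section JoinExtension

variable {V : Type*}

section

variable [Fintype V]

noncomputable def harmonicVec (H : SimpleGraph V) (x : V → ℝ) (v : V) : ℝ :=
  (√(H.degree v))⁻¹ * x v

lemma normLap_mulVec_apply (H : SimpleGraph V) (x : V → ℝ) (v : V) :
    (normLap H *ᵥ x) v = (√(H.degree v))⁻¹ *
      (H.degree v * harmonicVec H x v - ∑ u ∈ H.neighborFinset v, harmonicVec H x u) := by
  have hdiag : ∀ f : V → ℝ, diagonal f *ᵥ x = fun u => f u * x u := fun f =>
    funext (mulVec_diagonal f x)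
  rw [normLap, ← mulVec_mulVec, ← mulVec_mulVec, mulVec_diagonal, sub_mulVec, hdiag,
    Pi.sub_apply, degM, mulVec_diagonal]
  congr 2
  simp only [adjM, mulVec, dotProduct, boole_mul, ← sum_filter]
  rw [SimpleGraph.neighborFinset_eq_filter]
  rfl

lemma normLap_mulVec_apply_of_degree_pos {H : SimpleGraph V} (x : V → ℝ) {v : V}
    (hv : 0 < H.degree v) :
    (normLap H *ᵥ x) v =
      x v - (√(H.degree v))⁻¹ * ∑ u ∈ H.neighborFinset v, harmonicVec H x u := by
  have hsqrt : 0 < √(H.degree v : ℝ) := Real.sqrt_pos.2 (by exact_mod_cast hv)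
  rw [normLap_mulVec_apply, harmonicVec]
  field_simp
  linear_combination -x v * Real.mul_self_sqrt (Nat.cast_nonneg (H.degree v) : (0 : ℝ) ≤ _)

lemma normLap_mulVec_apply_eq_mul_iff {H : SimpleGraph V} (x : V → ℝ) {v : V}
    (hv : 0 < H.degree v) (γ : ℝ) :
    (normLap H *ᵥ x) v = γ * x v ↔
      ∑ u ∈ H.neighborFinset v, harmonicVec H x u = (1 - γ) * √(H.degree v) * x v := by
  have hsqrt : 0 < √(H.degree v : ℝ) := Real.sqrt_pos.2 (by exact_mod_cast hv)
  rw [normLap_mulVec_apply_of_degree_pos x hv]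
  constructor <;> intro h
  · field_simp at h
    linear_combination -h
  · rw [h]
    field_simp
    ring

lemma normLap_mulVec_apply_eq_of_sum_harmonicVec_eq {H H' : SimpleGraph V} {x : V → ℝ}
    {lam : ℝ} (hev : normLap H *ᵥ x = lam • x) (c : ℝ) {v : V} (hH : 0 < H.degree v)
    (hH' : 0 < H'.degree v)
    (hsum : √(H.degree v) * ∑ u ∈ H'.neighborFinset v, harmonicVec H' x u =
      c * √(H'.degree v) * ∑ u ∈ H.neighborFinset v, harmonicVec H x u) :
    (normLap H' *ᵥ x) v = (1 - (1 - lam) * c) * x v := by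
  have hsqrt : 0 < √(H.degree v : ℝ) := Real.sqrt_pos.2 (by exact_mod_cast hH)
  have hP := (normLap_mulVec_apply_eq_mul_iff x hH lam).1 (by rw [hev, Pi.smul_apply, smul_eq_mul])
  rw [normLap_mulVec_apply_eq_mul_iff x hH', ← mul_right_inj' hsqrt.ne', hsum, hP]
  ring

end

structure IsJoinExtension (SA' SB SC : Set V) (P G : SimpleGraph V) : Prop where
  disjoint_added_B : Disjoint SA' SB
  disjoint_added_C : Disjoint SA' SC
  disjoint_B_C : Disjoint SB SC
  adj_bipartite : ∀ u v, P.Adj u v → (u ∈ SB ∧ v ∈ SC) ∨ (u ∈ SC ∧ v ∈ SB)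
  adj_iff : ∀ u v, G.Adj u v ↔ P.Adj u v ∨ (u ∈ SA' ∧ v ∈ SB) ∨ (u ∈ SB ∧ v ∈ SA')

namespace IsJoinExtension

variable {SA' SB SC : Set V} {P G : SimpleGraph V} {v : V}

lemma notMem_B_union_C_of_mem_added (hJ : IsJoinExtension SA' SB SC P G) (hv : v ∈ SA') : v ∉ SB ∪ SC :=
  fun h => h.elim (hJ.disjoint_added_B.notMem_of_mem_left hv)
    (hJ.disjoint_added_C.notMem_of_mem_left hv)

lemma mem_C_of_adj (hJ : IsJoinExtension SA' SB SC P G) {u : V} (hv : v ∈ SB) (h : P.Adj v u) :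
    u ∈ SC :=
  (hJ.adj_bipartite v u h).elim And.right
    fun h' => absurd h'.1 (hJ.disjoint_B_C.notMem_of_mem_left hv)

lemma mem_B_of_adj (hJ : IsJoinExtension SA' SB SC P G) {u : V} (hv : v ∈ SC) (h : P.Adj v u) :
    u ∈ SB :=
  (hJ.adj_bipartite v u h).elim (fun h' => absurd h'.1 (hJ.disjoint_B_C.notMem_of_mem_right hv))
    And.right

variable [Fintype V]

lemma neighborFinset_of_mem_added (hJ : IsJoinExtension SA' SB SC P G) (hv : v ∈ SA') :
    G.neighborFinset v = univ.filter (· ∈ SB) := by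
  have hvBC := hJ.notMem_B_union_C_of_mem_added hv
  ext u
  have := hJ.adj_bipartite v u
  simp only [SimpleGraph.mem_neighborFinset, mem_filter, mem_univ, true_and, hJ.adj_iff,
    Set.mem_union] at hvBC this ⊢
  tauto

lemma neighborFinset_of_mem_B (hJ : IsJoinExtension SA' SB SC P G) (hv : v ∈ SB) :
    G.neighborFinset v = P.neighborFinset v ∪ univ.filter (· ∈ SA') := by
  have hvA := hJ.disjoint_added_B.notMem_of_mem_right hv
  ext u
  simp only [SimpleGraph.mem_neighborFinset, mem_union, mem_filter, mem_univ, true_and,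
    hJ.adj_iff]
  tauto

lemma disjoint_neighborFinset_added (hJ : IsJoinExtension SA' SB SC P G) (hv : v ∈ SB) :
    Disjoint (P.neighborFinset v) (univ.filter (· ∈ SA')) := by
  rw [disjoint_left]
  intro u hu huA
  exact hJ.disjoint_added_C.notMem_of_mem_left (mem_filter.1 huA).2
    (hJ.mem_C_of_adj hv ((P.mem_neighborFinset v u).1 hu))

lemma neighborFinset_of_mem_C (hJ : IsJoinExtension SA' SB SC P G) (hv : v ∈ SC) :
    G.neighborFinset v = P.neighborFinset v := by
  have hvA := hJ.disjoint_added_C.notMem_of_mem_right hv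
  have hvB := hJ.disjoint_B_C.notMem_of_mem_right hv
  ext u
  simp only [SimpleGraph.mem_neighborFinset, hJ.adj_iff]
  tauto

lemma degree_of_mem_B (hJ : IsJoinExtension SA' SB SC P G) (hv : v ∈ SB) :
    G.degree v = P.degree v + SA'.ncard := by
  rw [← SimpleGraph.card_neighborFinset_eq_degree, hJ.neighborFinset_of_mem_B hv,
    card_union_of_disjoint (hJ.disjoint_neighborFinset_added hv),
    SimpleGraph.card_neighborFinset_eq_degree, Set.ncard_eq_toFinset_card',
    Set.filter_mem_univ_eq_toFinset]

lemma degree_of_mem_C (hJ : IsJoinExtension SA' SB SC P G) (hv : v ∈ SC) :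
    G.degree v = P.degree v := by
  rw [← SimpleGraph.card_neighborFinset_eq_degree, hJ.neighborFinset_of_mem_C hv,
    SimpleGraph.card_neighborFinset_eq_degree]

lemma sum_harmonicVec_of_mem_added (hJ : IsJoinExtension SA' SB SC P G) {k : ℕ}
    (hPdegB : ∀ u ∈ SB, P.degree u = k) {x : V → ℝ}
    (horth : ∑ u ∈ univ.filter (· ∈ SB), x u = 0) (hv : v ∈ SA') :
    ∑ u ∈ G.neighborFinset v, harmonicVec G x u = 0 := by
  rw [hJ.neighborFinset_of_mem_added hv, sum_congr rfl fun u hu => by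
    rw [harmonicVec, hJ.degree_of_mem_B (mem_filter.1 hu).2, hPdegB u (mem_filter.1 hu).2],
    ← mul_sum, horth, mul_zero]

lemma sum_harmonicVec_of_mem_B (hJ : IsJoinExtension SA' SB SC P G) {x : V → ℝ}
    (hxA : ∀ u ∈ SA', x u = 0) (hv : v ∈ SB) :
    ∑ u ∈ G.neighborFinset v, harmonicVec G x u =
      ∑ u ∈ P.neighborFinset v, harmonicVec P x u := by
  rw [hJ.neighborFinset_of_mem_B hv, sum_union (hJ.disjoint_neighborFinset_added hv),
    sum_eq_zero (s := univ.filter (· ∈ SA')) fun u hu => by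
      rw [harmonicVec, hxA u (mem_filter.1 hu).2, mul_zero], add_zero]
  refine sum_congr rfl fun u hu => ?_
  rw [harmonicVec, harmonicVec,
    hJ.degree_of_mem_C (hJ.mem_C_of_adj hv ((P.mem_neighborFinset v u).1 hu))]

lemma sum_harmonicVec_of_mem_C (hJ : IsJoinExtension SA' SB SC P G) {k : ℕ} (hk : 0 < k)
    (hPdegB : ∀ u ∈ SB, P.degree u = k) (x : V → ℝ) (hv : v ∈ SC) :
    ∑ u ∈ G.neighborFinset v, harmonicVec G x u =
      √(k / (k + SA'.ncard)) * ∑ u ∈ P.neighborFinset v, harmonicVec P x u := by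
  have hk' : 0 < √(k : ℝ) := Real.sqrt_pos.2 (by exact_mod_cast hk)
  rw [hJ.neighborFinset_of_mem_C hv, mul_sum]
  refine sum_congr rfl fun u hu => ?_
  have huB := hJ.mem_B_of_adj hv ((P.mem_neighborFinset v u).1 hu)
  rw [harmonicVec, harmonicVec, hJ.degree_of_mem_B huB, hPdegB u huB,
    Real.sqrt_div (Nat.cast_nonneg _), Nat.cast_add]
  field_simp

end IsJoinExtension

end JoinExtension

/-- Attaching a set `A'` completely joined to the part `B` of a bipartite graph `P`
(with `B`-degrees `k ≥ 1`): each normalized-Laplacian eigenvalue `λ` of `P` whose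
eigenvector has `B`-part orthogonal to `1_B` gives rise to the eigenvalue
`γ = 1 - (1-λ)√(k/s)` of the new graph `G`, where `s = k + |A'|`. -/
theorem stmt14 {V : Type*} [Fintype V] (SA' SB SC : Set V)
    (hd1 : Disjoint SA' SB) (hd2 : Disjoint SA' SC) (hd3 : Disjoint SB SC)
    (hcover : SA' ∪ SB ∪ SC = Set.univ)
    (k : ℕ) (hk : 1 ≤ k)
    (P : SimpleGraph V)
    (hPbip : ∀ u v, P.Adj u v → (u ∈ SB ∧ v ∈ SC) ∨ (u ∈ SC ∧ v ∈ SB))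
    (hPdegB : ∀ v ∈ SB, P.degree v = k)
    (hPdegC : ∀ v ∈ SC, 0 < P.degree v)
    (lam : ℝ) (x : V → ℝ) (hx : x ≠ 0)
    (hsupp : ∀ v, v ∉ SB ∪ SC → x v = 0)
    (hev : (normLap P).mulVec x = lam • x)
    (horth : ∑ v ∈ Finset.univ.filter (· ∈ SB), x v = 0)
    (G : SimpleGraph V)
    (hG : ∀ u v, G.Adj u v ↔
      P.Adj u v ∨ (u ∈ SA' ∧ v ∈ SB) ∨ (u ∈ SB ∧ v ∈ SA'))
    (s : ℝ) (hs : s = k + SA'.ncard) :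
    ∃ y : V → ℝ, y ≠ 0 ∧
      (normLap G).mulVec y = (1 - (1 - lam) * Real.sqrt (k / s)) • y := by
  have hJ : IsJoinExtension SA' SB SC P G := ⟨hd1, hd2, hd3, hPbip, hG⟩
  have hxA : ∀ v ∈ SA', x v = 0 := fun v hv => hsupp v (hJ.notMem_B_union_C_of_mem_added hv)
  refine ⟨x, hx, funext fun v => ?_⟩
  rw [Pi.smul_apply, smul_eq_mul]
  obtain (hv | hv) | hv : v ∈ SA' ∪ SB ∪ SC := hcover ▸ Set.mem_univ v
  · rw [normLap_mulVec_apply, hJ.sum_harmonicVec_of_mem_added hPdegB horth hv, harmonicVec,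
      hxA v hv]
    ring
  · have hdegG : (G.degree v : ℝ) = s := by
      rw [hJ.degree_of_mem_B hv, hPdegB v hv, hs, Nat.cast_add]
    have hs0 : 0 < √s := Real.sqrt_pos.2 (by rw [hs]; positivity)
    have hdegP : 0 < P.degree v := hPdegB v hv ▸ hk
    refine normLap_mulVec_apply_eq_of_sum_harmonicVec_eq hev _ hdegP
      (hJ.degree_of_mem_B hv ▸ Nat.lt_add_right _ hdegP) ?_
    rw [hJ.sum_harmonicVec_of_mem_B hxA hv, hPdegB v hv, hdegG,
      Real.sqrt_div (Nat.cast_nonneg k)]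
    field_simp
  · refine normLap_mulVec_apply_eq_of_sum_harmonicVec_eq hev _ (hPdegC v hv)
      (hJ.degree_of_mem_C hv ▸ hPdegC v hv) ?_
    rw [hJ.sum_harmonicVec_of_mem_C hk hPdegB x hv, hJ.degree_of_mem_C hv, hs]
    ring
end

section
/- Fix n ≥ k ≥ 1. For a partition n = m₁ + ⋯ + m_k into positive integers, define the fuzzy ball FB(m₁,…,m_k) on n+k vertices b₁,…,b_n, v₁,…,v_k where {b₁,…,b_n} induces a complete graph, the b_i are partitioned into blocks of sizes m₁,…,m_k, and v_j is adjacent exactly to the b_i in the j-th block. Then any two fuzzy balls FB(m₁,…,m_k) and FB(m₁',…,m_k') with m₁+⋯+m_k = m₁'+⋯+m_k' = n are cospectral with respect to the normalized Laplacian. -/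
open scoped Classical
/-- The fuzzy ball determined by a block assignment `f : Fin n → Fin k`: the `b`-vertices
form a complete graph, and each `v_j` is adjacent exactly to the `b_i` with `f i = j`. -/
def FB {n k : ℕ} (f : Fin n → Fin k) : SimpleGraph (Fin n ⊕ Fin k) where
  Adj u v :=
    match u, v with
    | Sum.inl i, Sum.inl i' => i ≠ i'
    | Sum.inl i, Sum.inr j => f i = j
    | Sum.inr j, Sum.inl i => f i = j
    | Sum.inr _, Sum.inr _ => False
  symm := by
    constructor
    rintro (i | j) (i' | j') h
    · exact h.symm
    · exact h
    · exact h
    · exact h.elim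
  loopless := by
    constructor
    rintro (i | j) h
    · exact h rfl
    · exact h

/-!
Let `U` be the `n × k` matrix whose columns are the normalised indicator vectors of the blocks
and `s = (√m₁, …, √mₖ)`, so that `Uᵀ U = 1` and `U s` is the all-ones vector. Then the
normalized Laplacian of the fuzzy ball is `(1 + 1/n) I + A C(s) Aᵀ`, where `A = U ⊕ I` has
orthonormal columns and the `2k × 2k` matrix `C(s)` sees the partition only through `s sᵀ`.
By Sylvester's determinant identity the characteristic polynomial of `A C Aᵀ` is determined by
that of `C`, and since `‖s‖² = m₁ + ⋯ + mₖ = n` for every partition, a Householder reflection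
`H` with `H s' = s` conjugates `C(s')` into `C(s)`.
-/

open Matrix Finset Polynomial

namespace Matrix

theorem charpoly_mul_mul_eq_of_mul_eq_one {m ι R : Type*} [Fintype m] [Fintype ι]
    [DecidableEq m] [DecidableEq ι] [CommRing R]
    {A A' : Matrix m ι R} {B B' : Matrix ι m R} (h : B * A = 1) (h' : B' * A' = 1)
    (M : Matrix ι ι R) : (A * M * B).charpoly = (A' * M * B').charpoly := by
  have key : ∀ {A : Matrix m ι R} {B : Matrix ι m R}, B * A = 1 →
      X ^ Fintype.card ι * (A * M * B).charpoly = X ^ Fintype.card m * M.charpoly := by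
    intro A B h
    rw [Matrix.mul_assoc, charpoly_mul_comm', Matrix.mul_assoc, h, Matrix.mul_one]
  exact (isRegular_X_pow _).left.eq_iff.mp ((key h).trans (key h').symm)

theorem charpoly_add_scalar {n R : Type*} [Fintype n] [DecidableEq n] [CommRing R]
    (M : Matrix n n R) (μ : R) : (M + scalar n μ).charpoly = M.charpoly.comp (X - C μ) := by
  simpa [sub_eq_add_neg] using charpoly_sub_scalar M (-μ)

theorem exists_mem_orthogonalGroup_mulVec_eq {ι : Type*} [Fintype ι] [DecidableEq ι]
    {v w : ι → ℝ} (h : v ⬝ᵥ v = w ⬝ᵥ w) :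
    ∃ H ∈ orthogonalGroup ι ℝ, H *ᵥ v = w := by
  by_cases hvw : v = w
  · exact ⟨1, one_mem _, by rw [hvw, one_mulVec]⟩
  set d := v - w
  have hd : d ⬝ᵥ d ≠ 0 := by
    rwa [Ne, dotProduct_self_eq_zero, sub_eq_zero]
  have hdv : d ⬝ᵥ d = 2 * (d ⬝ᵥ v) := by
    simp only [d, sub_dotProduct, dotProduct_sub, dotProduct_comm w v]
    linarith
  refine ⟨1 - (2 / (d ⬝ᵥ d)) • vecMulVec d d, ?_, ?_⟩
  · rw [mem_orthogonalGroup_iff]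
    simp only [transpose_sub, transpose_one, transpose_smul, transpose_vecMulVec, mul_sub,
      sub_mul, mul_one, one_mul, smul_mul_smul, vecMulVec_mul_vecMulVec]
    rw [vecMulVec_smul]
    match_scalars
    · rfl
    · field_simp
      ring
  · have hdv₀ : d ⬝ᵥ v ≠ 0 := by simpa [hdv] using hd
    rw [sub_mulVec, one_mulVec, smul_mulVec, vecMulVec_mulVec, op_smul_eq_smul, smul_smul, hdv,
      show 2 / (2 * d ⬝ᵥ v) * d ⬝ᵥ v = 1 by field_simp, one_smul, sub_sub_cancel]

end Matrix

section Fibers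

variable {α β : Type*} [Fintype α] [DecidableEq β] (f : α → β)

noncomputable def fiberMatrix : Matrix α β ℝ :=
  of fun a b => if f a = b then (√(#{x | f x = b} : ℝ))⁻¹ else 0

noncomputable def sqrtFiberCard (b : β) : ℝ := √(#{x | f x = b} : ℝ)

noncomputable def fiberEmbedding : Matrix (α ⊕ β) (β ⊕ β) ℝ :=
  fromBlocks (fiberMatrix f) 0 0 1

theorem fiberMatrix_mulVec_sqrtFiberCard [Fintype β] :
    fiberMatrix f *ᵥ sqrtFiberCard f = 1 := by
  ext a
  have hpos : (0 : ℝ) < #{x | f x = f a} := by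
    exact_mod_cast card_pos.mpr ⟨a, by simp⟩
  simp [mulVec, dotProduct, fiberMatrix, sqrtFiberCard, hpos.ne']

theorem sqrtFiberCard_dotProduct_self [Fintype β] :
    sqrtFiberCard f ⬝ᵥ sqrtFiberCard f = Fintype.card α := by
  simp only [dotProduct, sqrtFiberCard, Real.mul_self_sqrt (Nat.cast_nonneg _)]
  exact_mod_cast (card_eq_sum_card_fiberwise fun x _ => mem_univ (f x)).symm

theorem transpose_fiberMatrix_mul_self (hf : ∀ b, 0 < #{x | f x = b}) :
    (fiberMatrix f)ᵀ * fiberMatrix f = 1 := by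
  ext b b'
  by_cases hbb : b = b'
  · subst hbb
    have hpos : (0 : ℝ) < #{x | f x = b} := by exact_mod_cast hf b
    simp [mul_apply, fiberMatrix, ← sum_filter, ← mul_inv, Real.mul_self_sqrt hpos.le,
      filter_filter, hpos.ne']
  · rw [one_apply_ne hbb, mul_apply]
    refine sum_eq_zero fun x _ => ?_
    by_cases hx : f x = b <;> simp [fiberMatrix, hx, hbb]

theorem transpose_fiberEmbedding_mul_self [Fintype β] (hf : ∀ b, 0 < #{x | f x = b}) :
    (fiberEmbedding f)ᵀ * fiberEmbedding f = 1 := by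
  simp [fiberEmbedding, fromBlocks_transpose, fromBlocks_multiply,
    transpose_fiberMatrix_mul_self f hf]

end Fibers

noncomputable def fuzzyBallCore {ι : Type*} [DecidableEq ι] (n : ℕ) (s : ι → ℝ) :
    Matrix (ι ⊕ ι) (ι ⊕ ι) ℝ :=
  -fromBlocks ((n : ℝ)⁻¹ • vecMulVec s s) ((√n)⁻¹ • 1) ((√n)⁻¹ • 1) ((n : ℝ)⁻¹ • 1)

theorem fuzzyBallCore_conj {ι : Type*} [Fintype ι] [DecidableEq ι] (n : ℕ) (s : ι → ℝ)
    {H : Matrix ι ι ℝ} (hH : H ∈ orthogonalGroup ι ℝ) :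
    fromBlocks H 0 0 H * fuzzyBallCore n s * (fromBlocks H 0 0 H)ᵀ =
      fuzzyBallCore n (H *ᵥ s) := by
  have hHH : H * Hᵀ = 1 := (mem_orthogonalGroup_iff _ _).mp hH
  simp [fuzzyBallCore, fromBlocks_multiply, fromBlocks_transpose, mul_vecMulVec, vecMulVec_mul,
    vecMul_transpose, hHH]

theorem normLap_apply {V : Type*} [Fintype V] (G : SimpleGraph V) (u v : V) :
    normLap G u v = (√(G.degree u : ℝ))⁻¹ *
      ((if u = v then (G.degree u : ℝ) else 0) - (if G.Adj u v then 1 else 0)) *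
      (√(G.degree v : ℝ))⁻¹ := by
  simp [normLap, degM, adjM, mul_diagonal, diagonal_mul, diagonal_apply]

section FuzzyBall

variable {n k : ℕ} (f : Fin n → Fin k)

@[simp] theorem FB_adj_inl_inl {i i' : Fin n} : (FB f).Adj (.inl i) (.inl i') ↔ i ≠ i' :=
  Iff.rfl

@[simp] theorem FB_adj_inl_inr {i : Fin n} {j : Fin k} : (FB f).Adj (.inl i) (.inr j) ↔ f i = j :=
  Iff.rfl

@[simp] theorem FB_adj_inr_inl {i : Fin n} {j : Fin k} : (FB f).Adj (.inr j) (.inl i) ↔ f i = j :=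
  Iff.rfl

@[simp] theorem FB_not_adj_inr_inr {j j' : Fin k} : ¬(FB f).Adj (.inr j) (.inr j') := id

theorem FB_neighborFinset_inl (i : Fin n) :
    (FB f).neighborFinset (.inl i) = (univ.erase i).disjSum {f i} := by
  ext (i' | j) <;> simp [eq_comm]

theorem FB_neighborFinset_inr (j : Fin k) :
    (FB f).neighborFinset (.inr j) = ({i | f i = j} : Finset (Fin n)).map .inl := by
  ext (i | j') <;> simp

theorem FB_degree_inl (i : Fin n) : (FB f).degree (.inl i) = n := by
  rw [← SimpleGraph.card_neighborFinset_eq_degree, FB_neighborFinset_inl, card_disjSum,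
    card_erase_of_mem (mem_univ i), card_univ, Fintype.card_fin, card_singleton]
  have := i.pos
  omega

theorem FB_degree_inr (j : Fin k) : (FB f).degree (.inr j) = #{i | f i = j} := by
  rw [← SimpleGraph.card_neighborFinset_eq_degree, FB_neighborFinset_inr, card_map]

theorem fiberEmbedding_mul_fuzzyBallCore_mul_transpose :
    fiberEmbedding f * fuzzyBallCore n (sqrtFiberCard f) * (fiberEmbedding f)ᵀ =
      -fromBlocks ((n : ℝ)⁻¹ • vecMulVec 1 1) ((√n)⁻¹ • fiberMatrix f)
        ((√n)⁻¹ • (fiberMatrix f)ᵀ) ((n : ℝ)⁻¹ • 1) := by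
  rw [fiberEmbedding, fuzzyBallCore, Matrix.mul_neg, Matrix.neg_mul, fromBlocks_transpose,
    fromBlocks_multiply, fromBlocks_multiply]
  simp only [Matrix.mul_smul, Matrix.smul_mul, mul_vecMulVec, vecMulVec_mul, vecMul_transpose,
    fiberMatrix_mulVec_sqrtFiberCard, Matrix.mul_zero, Matrix.mul_one, Matrix.one_mul, add_zero,
    zero_add, transpose_zero, transpose_one, smul_zero, zero_mulVec, zero_vecMulVec]

theorem normLap_FB_eq (hf : ∀ j, 0 < #{i | f i = j}) :
    normLap (FB f) = fiberEmbedding f * fuzzyBallCore n (sqrtFiberCard f) *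
      (fiberEmbedding f)ᵀ + scalar _ (1 + (n : ℝ)⁻¹) := by
  rw [fiberEmbedding_mul_fuzzyBallCore_mul_transpose]
  ext (i | j) (i' | j')
  · have hn : (0 : ℝ) < n := by exact_mod_cast i.pos
    by_cases hii : i = i'
    · subst hii
      simp [normLap_apply, FB_degree_inl]
      field_simp
      exact (Real.sq_sqrt hn.le).symm
    · simp [normLap_apply, FB_degree_inl, hii, ← mul_inv, Real.mul_self_sqrt hn.le]
  · simp [normLap_apply, FB_degree_inl, FB_degree_inr, fiberMatrix]
  · simp [normLap_apply, FB_degree_inl, FB_degree_inr, fiberMatrix, mul_comm]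
  · by_cases hjj : j = j'
    · subst hjj
      have hm : (0 : ℝ) < #{i | f i = j} := by exact_mod_cast hf j
      simp [normLap_apply, FB_degree_inr]
      field_simp
      exact (Real.sq_sqrt hm.le).symm
    · simp [normLap_apply, FB_degree_inr, hjj]

end FuzzyBall

theorem stmt15_general (n k : ℕ)
    (f g : Fin n → Fin k)
    (hf : ∀ j, 1 ≤ (Finset.univ.filter fun i => f i = j).card)
    (hg : ∀ j, 1 ≤ (Finset.univ.filter fun i => g i = j).card) :
    (normLap (FB f)).charpoly = (normLap (FB g)).charpoly := by
  obtain ⟨H, hH, hHs⟩ := exists_mem_orthogonalGroup_mulVec_eq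
    ((sqrtFiberCard_dotProduct_self g).trans (sqrtFiberCard_dotProduct_self f).symm)
  set A := fiberEmbedding f * fromBlocks H 0 0 H
  have hA : Aᵀ * A = 1 := by
    rw [transpose_mul, Matrix.mul_assoc, ← Matrix.mul_assoc (fiberEmbedding f)ᵀ,
      transpose_fiberEmbedding_mul_self f hf, Matrix.one_mul]
    simp [fromBlocks_transpose, fromBlocks_multiply, (mem_orthogonalGroup_iff' _ _).mp hH]
  have hconj : fiberEmbedding f * fuzzyBallCore n (sqrtFiberCard f) * (fiberEmbedding f)ᵀ =
      A * fuzzyBallCore n (sqrtFiberCard g) * Aᵀ := by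
    rw [← hHs, ← fuzzyBallCore_conj n _ hH, transpose_mul]
    simp only [A, Matrix.mul_assoc]
  rw [normLap_FB_eq f hf, normLap_FB_eq g hg, charpoly_add_scalar, charpoly_add_scalar, hconj,
    charpoly_mul_mul_eq_of_mul_eq_one hA (transpose_fiberEmbedding_mul_self g hg)]

/-- Any two fuzzy balls on `n + k` vertices corresponding to partitions of `n` into `k`
positive parts are cospectral with respect to the normalized Laplacian. -/
theorem stmt15 (n k : ℕ) (hk : 1 ≤ k) (hn : k ≤ n)
    (f g : Fin n → Fin k)
    (hf : ∀ j, 1 ≤ (Finset.univ.filter fun i => f i = j).card)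
    (hg : ∀ j, 1 ≤ (Finset.univ.filter fun i => g i = j).card) :
    (normLap (FB f)).charpoly = (normLap (FB g)).charpoly :=
  stmt15_general n k f g hf hg
end

section
/- Fix n ≥ k ≥ 1. For a partition n = m₁ + ⋯ + m_k into positive integers, define the inflated star IS(m₁,…,m_k) on n+k+1 vertices a, b₁,…,b_n, v₁,…,v_k where a is adjacent to all b_i (and to nothing else), the b_i are partitioned into blocks of sizes m₁,…,m_k, v_j is adjacent exactly to the b_i in the j-th block, and there are no other edges. Then any two inflated stars with the same n and k are cospectral with respect to the normalized Laplacian. -/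
/-!
Write `m_j` for the block sizes and `u_j = √(m_j / n)`, a unit vector of `ℝᵏ`. The
normalized adjacency matrix `D^{-1/2} A D^{-1/2}` of `IS f` factors as `T Sᵀ + S Tᵀ`, where
column `j` of `T` is `u_j e_a + e_{v_j}` and column `j` of `S` is `(2 m_j)^{-1/2}` times the
indicator of block `j`.
By Sylvester's determinant identity its characteristic polynomial is determined by that of the
`2k × 2k` matrix `[[SᵀT, SᵀS], [TᵀT, TᵀS]] = [[0, I/2], [I + u uᵀ, 0]]`. A Householder reflection
`P` sending `u` to any other unit vector `u'` conjugates this matrix, via `diag(P, P)`, to the one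
built from `u'`; hence the spectrum does not depend on the partition.
-/

open scoped Classical
/-- The inflated star determined by a block assignment `f : Fin n → Fin k`: the hub `a` is
adjacent to all `b_i`, and each `v_j` is adjacent exactly to the `b_i` with `f i = j`. -/
def IS {n k : ℕ} (f : Fin n → Fin k) : SimpleGraph (Unit ⊕ Fin n ⊕ Fin k) where
  Adj u v :=
    match u, v with
    | Sum.inl _, Sum.inr (Sum.inl _) => True
    | Sum.inr (Sum.inl _), Sum.inl _ => True
    | Sum.inr (Sum.inl i), Sum.inr (Sum.inr j) => f i = j
    | Sum.inr (Sum.inr j), Sum.inr (Sum.inl i) => f i = j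
    | _, _ => False
  symm := ⟨by
    rintro (a | i | j) (a' | i' | j') h <;> simp_all⟩
  loopless := ⟨by
    rintro (a | i | j) h <;> simp_all⟩

open Polynomial Matrix

namespace Matrix

variable {ι : Type*} [Fintype ι] [DecidableEq ι]

theorem charpoly_one_sub_congr {R : Type*} [CommRing R] [IsDomain R] [Infinite R]
    {A B : Matrix ι ι R} (h : A.charpoly = B.charpoly) :
    (1 - A).charpoly = (1 - B).charpoly := by
  have eval_one_sub (M : Matrix ι ι R) (x : R) :
      (1 - M).charpoly.eval x = (-1) ^ Fintype.card ι * M.charpoly.eval (1 - x) := by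
    rw [eval_charpoly, eval_charpoly, ← det_neg]
    congr 1
    simp only [scalar_apply, map_sub, map_one]
    abel
  exact Polynomial.funext fun x => by rw [eval_one_sub, eval_one_sub, h]

theorem charpoly_conj_of_mul_self_eq_one {R : Type*} [CommRing R] {P : Matrix ι ι R}
    (hP : P * P = 1) (M : Matrix ι ι R) : (P * M * P).charpoly = M.charpoly := by
  rw [mul_assoc, charpoly_mul_comm, mul_assoc, hP, mul_one]

theorem charpoly_fromBlocks_zero₁₁_zero₂₂_conj {R : Type*} [CommRing R] {P : Matrix ι ι R}
    (hP : P * P = 1) (A B : Matrix ι ι R) :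
    (fromBlocks 0 (P * B * P) (P * A * P) 0).charpoly = (fromBlocks 0 B A 0).charpoly := by
  have hQ : fromBlocks P 0 0 P * fromBlocks P 0 0 P = 1 := by
    simp [fromBlocks_multiply, hP]
  conv_rhs => rw [← charpoly_conj_of_mul_self_eq_one hQ]
  simp [fromBlocks_multiply, mul_assoc]

theorem exists_mul_self_eq_one_conj_vecMulVec {K : Type*} [Field K] [LinearOrder K]
    [IsStrictOrderedRing K] {u v : ι → K} (hu : u ⬝ᵥ u = 1) (hv : v ⬝ᵥ v = 1) :
    ∃ P : Matrix ι ι K, P * P = 1 ∧ P * vecMulVec u u * P = vecMulVec v v := by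
  obtain rfl | huv := eq_or_ne u v
  · exact ⟨1, mul_one 1, by simp⟩
  obtain ⟨w, hw_def⟩ : ∃ w, w = u - v := ⟨_, rfl⟩
  have hw : w ⬝ᵥ w ≠ 0 := fun h =>
    huv (sub_eq_zero.mp (hw_def ▸ dotProduct_self_eq_zero.mp h))
  have hwu : w ⬝ᵥ w = 2 * (w ⬝ᵥ u) := by
    simp only [hw_def, sub_dotProduct, dotProduct_sub, hu, hv, dotProduct_comm v u]
    ring
  set c := 2 / (w ⬝ᵥ w)
  have hcw : c * (w ⬝ᵥ w) = 2 := div_mul_cancel₀ _ hw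
  have hcu : c * (w ⬝ᵥ u) = 1 := by
    rw [hwu, mul_left_comm] at hcw
    linarith
  -- the reflection in the hyperplane `w⊥`, which swaps the unit vectors `u` and `v`
  set P := 1 - c • vecMulVec w w
  have hPu : P *ᵥ u = v := by
    simp only [P, sub_mulVec, one_mulVec, smul_mulVec, vecMulVec_mulVec, op_smul_eq_smul,
      smul_smul, hcu, one_smul]
    rw [hw_def, sub_sub_cancel]
  have huP : u ᵥ* P = v := by
    simp only [P, vecMul_sub, vecMul_one, vecMul_smul, vecMul_vecMulVec, smul_smul,
      dotProduct_comm u w, hcu, one_smul]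
    rw [hw_def, sub_sub_cancel]
  refine ⟨P, ?_, ?_⟩
  · simp only [P, sub_mul, mul_sub, one_mul, mul_one, smul_mul_smul_comm, vecMulVec_mul_vecMulVec,
      vecMulVec_smul, smul_smul]
    rw [mul_assoc, hcw]
    module
  · rw [mul_vecMulVec, hPu, vecMulVec_mul, huP]

theorem charpoly_fromBlocks_smul_one_one_add_vecMulVec_congr {K : Type*} [Field K] [LinearOrder K]
    [IsStrictOrderedRing K] (c : K) {u v : ι → K} (hu : u ⬝ᵥ u = 1) (hv : v ⬝ᵥ v = 1) :
    (fromBlocks 0 (c • 1) (1 + vecMulVec u u) 0).charpoly =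
      (fromBlocks 0 (c • 1) (1 + vecMulVec v v) 0).charpoly := by
  obtain ⟨P, hP, hPuv⟩ := exists_mul_self_eq_one_conj_vecMulVec hu hv
  rw [← charpoly_fromBlocks_zero₁₁_zero₂₂_conj hP]
  simp only [mul_add, add_mul, mul_one, hP, hPuv, Matrix.mul_smul, Matrix.smul_mul]

end Matrix

noncomputable def normAdj {V : Type*} [Fintype V] [DecidableEq V] (G : SimpleGraph V) :
    Matrix V V ℝ :=
  diagonal (fun v => (√(G.degree v))⁻¹) * adjM G * diagonal (fun v => (√(G.degree v))⁻¹)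

theorem normAdj_apply {V : Type*} [Fintype V] [DecidableEq V] (G : SimpleGraph V) (u v : V) :
    normAdj G u v = if G.Adj u v then (√(G.degree u))⁻¹ * (√(G.degree v))⁻¹ else 0 := by
  simp [normAdj, adjM]

theorem normLap_eq_one_sub_normAdj {V : Type*} [Fintype V] [DecidableEq V] {G : SimpleGraph V}
    (hG : ∀ v, G.degree v ≠ 0) : normLap G = 1 - normAdj G := by
  have hD : diagonal (fun v => (√(G.degree v))⁻¹) * diagonal (fun v => (G.degree v : ℝ)) *
      diagonal (fun v => (√(G.degree v))⁻¹) = 1 := by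
    rw [diagonal_mul_diagonal, diagonal_mul_diagonal, ← diagonal_one]
    congr 1
    ext v
    have : (0 : ℝ) < G.degree v := by exact_mod_cast Nat.pos_of_ne_zero (hG v)
    field_simp
    rw [Real.sq_sqrt this.le]
  rw [← hD, normAdj, ← sub_mul, ← mul_sub, normLap, degM]
  -- `normLap` and `degM` were elaborated with the classical `DecidableEq V` instance.
  congr!

section InflatedStar

variable {n k : ℕ} (f : Fin n → Fin k)

def blockSize (j : Fin k) : ℕ := (Finset.univ.filter fun i => f i = j).card

theorem sum_blockSize : ∑ j, blockSize f j = n := by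
  simpa [blockSize] using (Finset.card_eq_sum_card_fiberwise (f := f) (s := Finset.univ)
    (t := Finset.univ) fun _ _ => Finset.mem_univ _).symm

theorem blockSize_apply_pos (i : Fin n) : 0 < blockSize f (f i) :=
  Finset.card_pos.mpr ⟨i, by simp⟩

noncomputable def blockIndicator : Matrix (Fin n) (Fin k) ℝ :=
  of fun i j => if f i = j then (√(blockSize f j))⁻¹ else 0

theorem blockIndicator_transpose_mul_self (hf : ∀ j, 0 < blockSize f j) :
    (blockIndicator f)ᵀ * blockIndicator f = 1 := by
  ext j j'
  obtain rfl | h := eq_or_ne j j'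
  · have hm : (0 : ℝ) < blockSize f j := Nat.cast_pos.mpr (hf j)
    simp only [blockIndicator, mul_apply, transpose_apply, of_apply, ite_mul, mul_ite, mul_zero,
      zero_mul, Finset.sum_ite, Finset.filter_filter, and_self, Finset.sum_const_zero, add_zero,
      Finset.sum_const, nsmul_eq_mul, one_apply_eq]
    change (blockSize f j : ℝ) * _ = 1
    rw [← mul_inv, Real.mul_self_sqrt hm.le, mul_inv_cancel₀ hm.ne']
  · rw [mul_apply, one_apply_ne h]
    refine Finset.sum_eq_zero fun i _ => ?_
    simp only [blockIndicator, transpose_apply, of_apply]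
    split_ifs with h₁ h₂
    · exact absurd (h₁.symm.trans h₂) h
    all_goals simp

noncomputable def blockProfile (j : Fin k) : ℝ := √(blockSize f j) / √n

theorem blockProfile_mul_inv_sqrt_blockSize (i : Fin n) :
    blockProfile f (f i) * (√(blockSize f (f i)))⁻¹ = (√n)⁻¹ := by
  have := (Real.sqrt_pos.mpr (Nat.cast_pos.mpr (blockSize_apply_pos f i))).ne'
  rw [blockProfile]
  field_simp

theorem blockProfile_dotProduct_self (hn : 0 < n) : blockProfile f ⬝ᵥ blockProfile f = 1 := by
  simp only [dotProduct, blockProfile, div_mul_div_comm, Real.mul_self_sqrt (Nat.cast_nonneg _),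
    ← Finset.sum_div, ← Nat.cast_sum, sum_blockSize]
  exact div_self (by positivity)

namespace IS

theorem degree_inl (a : Unit) : (IS f).degree (.inl a) = n := by
  have h : (IS f).neighborFinset (.inl a) =
      Finset.univ.map (Function.Embedding.inl.trans Function.Embedding.inr) := by
    ext (_ | _ | _) <;> simp only [SimpleGraph.mem_neighborFinset] <;> simp [IS]
  simp [← SimpleGraph.card_neighborFinset_eq_degree, h]

theorem degree_inr_inl (i : Fin n) : (IS f).degree (.inr (.inl i)) = 2 := by
  have h : (IS f).neighborFinset (.inr (.inl i)) = {.inl (), .inr (.inr (f i))} := by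
    ext (_ | _ | _) <;> simp only [SimpleGraph.mem_neighborFinset] <;> simp [IS, eq_comm]
  simp [← SimpleGraph.card_neighborFinset_eq_degree, h]

theorem degree_inr_inr (j : Fin k) : (IS f).degree (.inr (.inr j)) = blockSize f j := by
  have h : (IS f).neighborFinset (.inr (.inr j)) =
      (Finset.univ.filter fun i => f i = j).map
        (Function.Embedding.inl.trans Function.Embedding.inr) := by
    ext (_ | _ | _) <;> simp only [SimpleGraph.mem_neighborFinset] <;> simp [IS]
  simp [← SimpleGraph.card_neighborFinset_eq_degree, h, blockSize]

theorem degree_ne_zero (hn : 0 < n) (hf : ∀ j, 0 < blockSize f j) (v : Unit ⊕ Fin n ⊕ Fin k) :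
    (IS f).degree v ≠ 0 := by
  rcases v with a | i | j
  · rw [degree_inl]; exact hn.ne'
  · rw [degree_inr_inl]; exact two_ne_zero
  · rw [degree_inr_inr]; exact (hf j).ne'

noncomputable def outerFactor : Matrix (Unit ⊕ Fin n ⊕ Fin k) (Fin k) ℝ :=
  fromRows (replicateRow Unit (blockProfile f)) (fromRows 0 1)

noncomputable def innerFactor : Matrix (Unit ⊕ Fin n ⊕ Fin k) (Fin k) ℝ :=
  (√2)⁻¹ • fromRows 0 (fromRows (blockIndicator f) 0)

theorem normAdj_eq : normAdj (IS f) =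
    outerFactor f * (innerFactor f)ᵀ + innerFactor f * (outerFactor f)ᵀ := by
  ext (_ | i | j) (_ | i' | j') <;>
    simp only [normAdj_apply, degree_inl, degree_inr_inl, degree_inr_inr] <;>
    simp [outerFactor, innerFactor, blockIndicator, mul_apply, IS]
  · rw [blockProfile_mul_inv_sqrt_blockSize, mul_comm]
  · rw [mul_comm, blockProfile_mul_inv_sqrt_blockSize]
  · obtain rfl | h := eq_or_ne (f i) j'
    · simp
    · simp [h, h.symm]
  · simp only [mul_comm]
    -- the two `if`s carry different `Decidable` instances
    congr

theorem outerFactor_transpose_mul_self :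
    (outerFactor f)ᵀ * outerFactor f = 1 + vecMulVec (blockProfile f) (blockProfile f) := by
  simp [outerFactor, transpose_fromRows, fromCols_mul_fromRows, vecMulVec_eq Unit, add_comm]

theorem innerFactor_transpose_mul_outerFactor : (innerFactor f)ᵀ * outerFactor f = 0 := by
  simp [outerFactor, innerFactor, transpose_fromRows, fromCols_mul_fromRows]

theorem outerFactor_transpose_mul_innerFactor : (outerFactor f)ᵀ * innerFactor f = 0 := by
  rw [← transpose_transpose (innerFactor f), ← transpose_mul,
    innerFactor_transpose_mul_outerFactor, transpose_zero]

theorem innerFactor_transpose_mul_self (hf : ∀ j, 0 < blockSize f j) :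
    (innerFactor f)ᵀ * innerFactor f = (2 : ℝ)⁻¹ • 1 := by
  have h2 : (√2)⁻¹ * (√2)⁻¹ = (2 : ℝ)⁻¹ := by
    rw [← mul_inv, Real.mul_self_sqrt zero_le_two]
  simp [innerFactor, transpose_fromRows, fromCols_mul_fromRows,
    blockIndicator_transpose_mul_self f hf, smul_smul, h2]

theorem X_pow_mul_charpoly_normAdj (hf : ∀ j, 0 < blockSize f j) :
    X ^ Fintype.card (Fin k ⊕ Fin k) * (normAdj (IS f)).charpoly =
      X ^ Fintype.card (Unit ⊕ Fin n ⊕ Fin k) *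
        (fromBlocks 0 ((2 : ℝ)⁻¹ • 1)
          (1 + vecMulVec (blockProfile f) (blockProfile f)) 0).charpoly := by
  rw [normAdj_eq, ← fromCols_mul_fromRows, charpoly_mul_comm', fromRows_mul_fromCols,
    innerFactor_transpose_mul_outerFactor, innerFactor_transpose_mul_self f hf,
    outerFactor_transpose_mul_self, outerFactor_transpose_mul_innerFactor]

end IS

end InflatedStar

/-- Any two inflated stars on `n + k + 1` vertices corresponding to partitions of `n` into
`k` positive parts are cospectral with respect to the normalized Laplacian. -/
theorem stmt16 (n k : ℕ) (hk : 1 ≤ k) (hn : k ≤ n)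
    (f g : Fin n → Fin k)
    (hf : ∀ j, 1 ≤ (Finset.univ.filter fun i => f i = j).card)
    (hg : ∀ j, 1 ≤ (Finset.univ.filter fun i => g i = j).card) :
    (normLap (IS f)).charpoly = (normLap (IS g)).charpoly := by
  have hn₀ : 0 < n := hk.trans hn
  rw [normLap_eq_one_sub_normAdj (IS.degree_ne_zero f hn₀ hf),
    normLap_eq_one_sub_normAdj (IS.degree_ne_zero g hn₀ hg)]
  apply charpoly_one_sub_congr
  refine (isRegular_X_pow (Fintype.card (Fin k ⊕ Fin k))).left.eq_iff.mp ?_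
  rw [IS.X_pow_mul_charpoly_normAdj f hf, IS.X_pow_mul_charpoly_normAdj g hg,
    charpoly_fromBlocks_smul_one_one_add_vecMulVec_congr _ (blockProfile_dotProduct_self f hn₀)
      (blockProfile_dotProduct_self g hn₀)]
end
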